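/- arXiv:2510.19242 — 3 statements merged into one kernel-verified Lean document; each statement's English description precedes it below -/
import Mathlib

section
/- The Jacobi theta value θ_{1,0}(q) := ∑_{n∈ℤ} q^{n^2} satisfies θ_{1,0}(q) = (q^2;q^2)_∞^5 / ((q;q)_∞^2 (q^4;q^4)_∞^2) as an identity of formal power series in q. -/
open PowerSeries Finset

/-- The q-Pochhammer infinite product `(a; q)_∞ = ∏_{k ≥ 0} (1 - a * q^k)`, as a formal
power series, defined coefficientwise via its stabilizing truncated products: when `a`
and `q` have positive order, the `n`-th coefficient of `∏_{k < N} (1 - a * q^k)` does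
not depend on `N` as soon as `N > n`, so this is the limit of the partial products. -/
noncomputable def qPoch {R : Type*} [CommRing R] (a q : PowerSeries R) : PowerSeries R :=
  PowerSeries.mk fun n => PowerSeries.coeff n (∏ k ∈ Finset.range (n + 1), (1 - a * q ^ k))

/-- `Ek R k = (q^k; q^k)_∞ = ∏_{m ≥ 1} (1 - q^{k m})`. -/
noncomputable def Ek (R : Type*) [CommRing R] (k : ℕ) : PowerSeries R :=
  qPoch ((PowerSeries.X : PowerSeries R) ^ k) ((PowerSeries.X : PowerSeries R) ^ k)

/-- `E_k = (q^k; q^k)_∞` viewed as a formal Laurent series over `ℚ`. -/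
noncomputable def EL (k : ℕ) : LaurentSeries ℚ := ((Ek ℚ k : PowerSeries ℚ) : LaurentSeries ℚ)

/-- The variable `q` as a formal Laurent series over `ℚ`. -/
noncomputable def qL : LaurentSeries ℚ := ((PowerSeries.X : PowerSeries ℚ) : LaurentSeries ℚ)

/-- A power series viewed as a Laurent series. -/
noncomputable def toL (f : PowerSeries ℚ) : LaurentSeries ℚ := (f : LaurentSeries ℚ)

/-- θ_{1,0}(q) = ∑_{n ∈ ℤ} q^{n²}: its m-th coefficient is the number of integers n
with n² = m. -/
noncomputable def theta10 : PowerSeries ℚ :=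
  PowerSeries.mk fun m => ({n : ℤ | n ^ 2 = (m : ℤ)}.ncard : ℚ)

namespace Theta10Proof

local notation "R" => PowerSeries ℚ

/-- coefficients below n+1 agree iff X^(n+1) divides difference -/
lemma dvd_iff_coeff {n : ℕ} {f g : R} :
    (X:R)^(n+1) ∣ f - g ↔ ∀ i ≤ n, PowerSeries.coeff i f = PowerSeries.coeff i g := by
  rw [PowerSeries.X_pow_dvd_iff]
  constructor
  · intro h i hi
    have := h i (by omega)
    rwa [map_sub, sub_eq_zero] at this
  · intro h m hm
    rw [map_sub, sub_eq_zero]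
    exact h m (by omega)

/-- Sequence of power series converging coefficientwise to f. -/
def Lim (F : ℕ → R) (f : R) : Prop :=
  ∀ n : ℕ, ∃ N₀ : ℕ, ∀ N ≥ N₀, (X:R)^(n+1) ∣ F N - f

lemma Lim.unique {F : ℕ → R} {f g : R} (hf : Lim F f) (hg : Lim F g) : f = g := by
  ext n
  obtain ⟨N₁, h₁⟩ := hf n
  obtain ⟨N₂, h₂⟩ := hg n
  have d1 := (dvd_iff_coeff.mp (h₁ (max N₁ N₂) (le_max_left _ _))) n le_rfl
  have d2 := (dvd_iff_coeff.mp (h₂ (max N₁ N₂) (le_max_right _ _))) n le_rfl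
  rw [← d1, d2]

lemma Lim.congr {F G : ℕ → R} {f : R} (h : Lim F f) (hFG : ∀ N, F N = G N) : Lim G f := by
  intro n; obtain ⟨N₀, h₀⟩ := h n
  exact ⟨N₀, fun N hN => (hFG N) ▸ h₀ N hN⟩

lemma Lim.const (f : R) : Lim (fun _ => f) f := fun n => ⟨0, fun N _ => by simp⟩

lemma Lim.mul {F G : ℕ → R} {f g : R} (hf : Lim F f) (hg : Lim G g) :
    Lim (fun N => F N * G N) (f * g) := by
  intro n
  obtain ⟨N₁, h₁⟩ := hf n
  obtain ⟨N₂, h₂⟩ := hg n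
  refine ⟨max N₁ N₂, fun N hN => ?_⟩
  have d1 := h₁ N (le_trans (le_max_left _ _) hN)
  have d2 := h₂ N (le_trans (le_max_right _ _) hN)
  have : F N * G N - f * g = F N * (G N - g) + (F N - f) * g := by ring
  rw [this]
  exact dvd_add (Dvd.dvd.mul_left d2 _) (Dvd.dvd.mul_right d1 _)

lemma Lim.pow {F : ℕ → R} {f : R} (hf : Lim F f) (k : ℕ) :
    Lim (fun N => F N ^ k) (f ^ k) := by
  induction k with
  | zero => simpa using Lim.const 1
  | succ k ih =>
    have := ih.mul hf
    simpa [pow_succ] using this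

lemma Lim.comp {F : ℕ → R} {f : R} (hf : Lim F f) (φ : ℕ → ℕ) (hφ : ∀ N, N ≤ φ N) :
    Lim (fun N => F (φ N)) f := by
  intro n
  obtain ⟨N₀, h₀⟩ := hf n
  exact ⟨N₀, fun N hN => h₀ (φ N) (le_trans hN (hφ N))⟩

/-- Stabilization of partial products whose tail factors are ≡ 1. -/
lemma prod_stab (f : ℕ → R) (n N : ℕ)
    (h : ∀ j, N ≤ j → (X:R)^(n+1) ∣ f j - 1) :
    ∀ M, N ≤ M → (X:R)^(n+1) ∣ ∏ j ∈ range M, f j - ∏ j ∈ range N, f j := by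
  intro M
  induction M with
  | zero => intro hNM; have : N = 0 := by omega
            subst this; simp
  | succ M ih =>
    intro hNM
    rcases Nat.lt_or_ge N (M+1) with hlt | hge
    · have hNM' : N ≤ M := by omega
      have ihd := ih hNM'
      have key : ∏ j ∈ range (M+1), f j - ∏ j ∈ range N, f j
          = (∏ j ∈ range M, f j - ∏ j ∈ range N, f j) * f M
            + (∏ j ∈ range N, f j) * (f M - 1) := by
        rw [prod_range_succ]; ring
      rw [key]
      exact dvd_add (ihd.mul_right _) ((h M hNM').mul_left _)
    · have : N = M + 1 := by omega
      subst this; simp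

/-- partial products of `(q^k;q^k)_∞` -/
noncomputable def PB (k N : ℕ) : R := ∏ j ∈ range N, (1 - (X:R)^(k*(j+1)))
noncomputable def PO (N : ℕ) : R := ∏ j ∈ range N, (1 - (X:R)^(2*j+1))
noncomputable def PT (N : ℕ) : R := ∏ j ∈ range N, (1 - (X:R)^(4*j+2))
noncomputable def PM (N : ℕ) : R := ∏ j ∈ range N, (1 + (X:R)^(2*j+1))

lemma one_sub_XPow_tail {n c : ℕ} (h : n + 1 ≤ c) :
    (X:R)^(n+1) ∣ (1 - (X:R)^c) - 1 := by
  have : (1 - (X:R)^c) - 1 = -(X:R)^c := by ring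
  rw [this]
  exact (pow_dvd_pow _ h).neg_right

lemma coeff_Ek (k n : ℕ) :
    PowerSeries.coeff n (Ek ℚ k) = PowerSeries.coeff n (PB k (n+1)) := by
  rw [Ek, qPoch, PowerSeries.coeff_mk, PB]
  congr 1
  refine Finset.prod_congr rfl fun j _ => ?_
  rw [← pow_mul, ← pow_add]
  ring_nf

lemma PB_stab {k : ℕ} (hk : 1 ≤ k) (n : ℕ) {N M : ℕ} (hN : n + 1 ≤ N) (hNM : N ≤ M) :
    (X:R)^(n+1) ∣ PB k M - PB k N := by
  refine prod_stab _ n N (fun j hj => one_sub_XPow_tail ?_) M hNM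
  calc n + 1 ≤ j + 1 := by omega
    _ ≤ k * (j+1) := Nat.le_mul_of_pos_left _ (by omega)

lemma lim_PB {k : ℕ} (hk : 1 ≤ k) : Lim (PB k) (Ek ℚ k) := by
  intro n
  refine ⟨n+1, fun N hN => ?_⟩
  rw [dvd_iff_coeff]
  intro i hi
  rw [coeff_Ek]
  have h := PB_stab (k := k) hk i (le_refl (i+1)) (show i + 1 ≤ N by omega)
  exact (dvd_iff_coeff.mp h) i le_rfl

lemma split1 (N : ℕ) : PB 1 (2*N) = PB 2 N * PO N := by
  induction N with
  | zero => simp [PB, PO]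
  | succ N ih =>
    have h2 : 2*(N+1) = (2*N) + 1 + 1 := by ring
    rw [h2]
    simp only [PB, PO, prod_range_succ] at ih ⊢
    rw [ih]
    have e1 : (1:ℕ) * (2*N+1) = 2*N+1 := one_mul _
    have e2 : (1:ℕ) * (2*N+1+1) = 2*(N+1) := by ring
    rw [e1, e2]; ring

lemma split2 (N : ℕ) : PB 2 (2*N) = PB 4 N * PT N := by
  induction N with
  | zero => simp [PB, PT]
  | succ N ih =>
    have h2 : 2*(N+1) = (2*N) + 1 + 1 := by ring
    rw [h2]
    simp only [PB, PT, prod_range_succ] at ih ⊢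
    rw [ih]
    have e1 : (2:ℕ) * (2*N+1) = 4*N+2 := by ring
    have e2 : (2:ℕ) * (2*N+1+1) = 4*(N+1) := by ring
    rw [e1, e2]; ring

lemma split3 (N : ℕ) : PO N * PM N = PT N := by
  rw [PO, PM, PT, ← prod_mul_distrib]
  refine Finset.prod_congr rfl fun j _ => ?_
  have : (4*j+2) = (2*j+1) * 2 := by ring
  rw [this, pow_mul]
  ring


/-- Gaussian binomial `[m, k]` in the variable `X²`, defined by the q-Pascal recursion. -/
noncomputable def gb : ℕ → ℕ → R
  | 0, 0 => 1
  | 0, _+1 => 0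
  | _+1, 0 => 1
  | m+1, k+1 => gb m (k+1) + (X:R)^(2*(m-k)) * gb m k

lemma gb_succ_succ (m k : ℕ) :
    gb (m+1) (k+1) = gb m (k+1) + (X:R)^(2*(m-k)) * gb m k := by
  rfl

lemma gb_zero_right (m : ℕ) : gb m 0 = 1 := by cases m <;> rfl

lemma gb_eq_zero : ∀ m k, m < k → gb m k = 0 := by
  intro m
  induction m with
  | zero => intro k hk; match k, hk with | k+1, _ => rfl
  | succ m ih =>
    intro k hk
    match k, hk with
    | k+1, hk =>
      rw [gb_succ_succ, ih (k+1) (by omega), ih k (by omega)]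
      ring

lemma gb_diag (m : ℕ) : gb m m = 1 := by
  induction m with
  | zero => rfl
  | succ m ih =>
    rw [gb_succ_succ, gb_eq_zero m (m+1) (by omega), ih]
    simp

lemma gb_one (m : ℕ) : gb m 1 = ∑ i ∈ range m, (X:R)^(2*i) := by
  induction m with
  | zero => simp; rfl
  | succ m ih =>
    rw [gb_succ_succ, ih, gb_zero_right, sum_range_succ]
    simp

lemma gb_dual_pascal : ∀ m k, gb (m+1) (k+1) = (X:R)^(2*(k+1)) * gb m (k+1) + gb m k := by
  intro m
  induction m with
  | zero =>
    intro k
    cases k with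
    | zero => rw [gb_succ_succ]; norm_num [gb_diag, gb_eq_zero 0 1 (by omega), gb_zero_right]
    | succ k =>
      rw [gb_succ_succ, gb_eq_zero 0 (k+2) (by omega), gb_eq_zero 0 (k+1) (by omega)]
      ring
  | succ m ih =>
    intro k
    cases k with
    | zero =>
      rw [gb_succ_succ (m+1) 0, gb_zero_right, gb_one]
      have hS : ∑ i ∈ range (m+1), (X:R)^(2*i) = ∑ i ∈ range (m+1), ((X:R)^2)^i :=
        Finset.sum_congr rfl fun i _ => by rw [← pow_mul]
      have hg := geom_sum_mul ((X:R)^2) (m+1)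
      have h1 : (X:R)^(2*(m+1-0)) = ((X:R)^2)^(m+1) := by rw [← pow_mul]; norm_num
      have h2 : (X:R)^(2*(0+1)) = (X:R)^2 := by norm_num
      rw [hS, h1, h2]
      linear_combination -hg
    | succ k =>
      conv_rhs => rw [gb_succ_succ m (k+1), gb_succ_succ m k]
      rw [gb_succ_succ (m+1) (k+1), ih (k+1), ih k]
      have e4 : m + 1 - (k+1) = m - k := by omega
      rw [e4]
      rcases le_or_gt (k+1) m with hk | hk
      · have p2 : (X:R)^(2*(m-k)) * (X:R)^(2*(k+1))
            = (X:R)^(2*(k+1+1)) * (X:R)^(2*(m-(k+1))) := by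
          rw [← pow_add, ← pow_add]; congr 1; omega
        linear_combination (gb m (k+1)) * p2
      · rw [gb_eq_zero m (k+1) hk]
        ring

/-- Box identity: `gb m k * (q;q)_k = ∏_{i<k} (1 - q^{m-k+1+i})` with `q = X²`. -/
lemma gb_box : ∀ m k, k ≤ m →
    gb m k * ∏ i ∈ range k, (1 - (X:R)^(2*(i+1)))
      = ∏ i ∈ range k, (1 - (X:R)^(2*(m-k+1+i))) := by
  intro m
  induction m with
  | zero =>
    intro k hk
    have : k = 0 := by omega
    subst this; simp [gb_zero_right]
  | succ m ih =>
    intro k hk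
    cases k with
    | zero => simp [gb_zero_right]
    | succ k =>
      rcases Nat.lt_or_ge k m with hkm | hkm
      · -- k + 1 ≤ m
        have ih1 := ih (k+1) (by omega)
        have ih2 := ih k (by omega)
        -- peel first factor of ih1's RHS
        have peel : ∏ i ∈ range (k+1), (1 - (X:R)^(2*(m-(k+1)+1+i)))
            = (1 - (X:R)^(2*(m-k))) * ∏ i ∈ range k, (1 - (X:R)^(2*(m-k+1+i))) := by
          rw [Finset.prod_range_succ']
          have h0 : m-(k+1)+1+0 = m-k := by omega
          rw [h0, mul_comm]
          congr 1
          refine Finset.prod_congr rfl fun i _ => ?_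
          congr 2
          omega
        -- target: peel last factor
        have tgt : ∏ i ∈ range (k+1), (1 - (X:R)^(2*(m+1-(k+1)+1+i)))
            = (∏ i ∈ range k, (1 - (X:R)^(2*(m-k+1+i)))) * (1 - (X:R)^(2*(m+1))) := by
          rw [Finset.prod_range_succ]
          congr 1
          · refine Finset.prod_congr rfl fun i _ => ?_
            congr 2
            omega
          · congr 2
            omega
        have pexp : (X:R)^(2*(m-k)) * (X:R)^(2*(k+1)) = (X:R)^(2*(m+1)) := by
          rw [← pow_add]; congr 1; omega
        rw [gb_succ_succ, add_mul, ih1, peel, tgt, prod_range_succ]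
        linear_combination ((X:R)^(2*(m-k)) * (1 - (X:R)^(2*(k+1)))) * ih2
          - (∏ i ∈ range k, (1 - (X:R)^(2*(m-k+1+i)))) * pexp
      · -- k + 1 = m + 1
        have : k = m := by omega
        subst this
        rw [gb_diag, one_mul]
        refine Finset.prod_congr rfl fun i _ => ?_
        congr 2
        omega


/-- exponent `(N-k)²` -/
def ee (N k : ℕ) : ℕ := (((N:ℤ) - k)^2).toNat

lemma ee_cast (N k : ℕ) : ((ee N k : ℕ) : ℤ) = ((N:ℤ) - k)^2 :=
  Int.toNat_of_nonneg (sq_nonneg _)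

lemma gb_step (M k : ℕ) : gb (M+2) (k+2)
    = (X:R)^(2*(k+2)) * gb M (k+2) + (1 + (X:R)^(2*(M+1))) * gb M (k+1)
      + (X:R)^(2*(M-k)) * gb M k := by
  rw [gb_dual_pascal (M+1) (k+1), gb_succ_succ M (k+1), gb_succ_succ M k]
  rcases le_or_gt (k+1) M with hk | hk
  · have pexp : (X:R)^(2*(k+1+1)) * (X:R)^(2*(M-(k+1))) = (X:R)^(2*(M+1)) := by
      rw [← pow_add]; congr 1; omega
    linear_combination (gb M (k+1)) * pexp
  · rw [gb_eq_zero M (k+1) hk]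
    ring

lemma gb_edge (N : ℕ) : gb (2*N+2) 1 = 1 + (X:R)^(4*N+2) + (X:R)^2 * gb (2*N) 1 := by
  rw [gb_one, gb_one, Finset.sum_range_succ, Finset.sum_range_succ', Finset.mul_sum]
  have hsplit : ∀ i : ℕ, (X:R)^(2*(i+1)) = (X:R)^2 * (X:R)^(2*i) := by
    intro i; rw [← pow_add]; congr 1; omega
  simp only [hsplit]
  have h1 : (X:R)^(2*0) = 1 := by norm_num
  have h2 : (X:R)^2 * (X:R)^(2*(2*N)) = (X:R)^(4*N+2) := by
    rw [← pow_add]; congr 1; omega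
  rw [h1, h2]
  ring

noncomputable def hq (N k : ℕ) : R := (X:R)^(ee N k) * gb (2*N) k

lemma key (N : ℕ) :
    ∑ k ∈ range (2*N+1+1+1), hq (N+1) k
      = (1 + (X:R)^(2*N+1))^2 * ∑ k ∈ range (2*N+1), hq N k := by
  have hqdef : ∀ M k, hq M k = (X:R)^(ee M k) * gb (2*M) k := fun _ _ => rfl
  have h2N : 2*(N+1) = 2*N+2 := by ring
  have peel : ∑ k ∈ range (2*N+1+1+1), hq (N+1) k
      = (∑ k ∈ range (2*N+1), hq (N+1) (k+2)) + hq (N+1) 1 + hq (N+1) 0 := by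
    rw [Finset.sum_range_succ' (hq (N+1)) (2*N+1+1),
      Finset.sum_range_succ' (fun k => hq (N+1) (k+1)) (2*N+1)]
  -- exponent identities
  have id1 : ∀ k : ℕ, (X:R)^(ee (N+1) (k+2)) * (X:R)^(2*(k+2))
      = (X:R)^(2*N+1) * (X:R)^(ee N (k+2)) := by
    intro k
    rw [← pow_add, ← pow_add]
    congr 1
    have : ((ee (N+1) (k+2) + 2*(k+2) : ℕ) : ℤ) = ((2*N+1 + ee N (k+2) : ℕ) : ℤ) := by
      push_cast [ee_cast]; ring
    exact_mod_cast this
  have id2 : ∀ k : ℕ, ee (N+1) (k+2) = ee N (k+1) := by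
    intro k
    have : ((ee (N+1) (k+2) : ℕ) : ℤ) = ((ee N (k+1) : ℕ) : ℤ) := by
      rw [ee_cast, ee_cast]; push_cast; ring
    exact_mod_cast this
  have id3 : ∀ k : ℕ, k ≤ 2*N → (X:R)^(ee (N+1) (k+2)) * (X:R)^(2*(2*N - k))
      = (X:R)^(2*N+1) * (X:R)^(ee N k) := by
    intro k hk
    rw [← pow_add, ← pow_add]
    congr 1
    have : ((ee (N+1) (k+2) + 2*(2*N - k) : ℕ) : ℤ) = ((2*N+1 + ee N k : ℕ) : ℤ) := by
      push_cast [ee_cast, Nat.cast_sub hk]; ring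
    exact_mod_cast this
  have hsum : ∑ k ∈ range (2*N+1), hq (N+1) (k+2)
      = (X:R)^(2*N+1) * (∑ k ∈ range (2*N+1), hq N (k+2))
        + (1+(X:R)^(4*N+2)) * (∑ k ∈ range (2*N+1), hq N (k+1))
        + (X:R)^(2*N+1) * (∑ k ∈ range (2*N+1), hq N k) := by
    rw [Finset.mul_sum, Finset.mul_sum, Finset.mul_sum, ← Finset.sum_add_distrib,
      ← Finset.sum_add_distrib]
    refine Finset.sum_congr rfl fun k hk => ?_
    have hk' : k ≤ 2*N := by
      have := Finset.mem_range.mp hk; omega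
    have hstep : hq (N+1) (k+2) = (X:R)^(ee (N+1) (k+2)) *
        ((X:R)^(2*(k+2)) * gb (2*N) (k+2) + (1 + (X:R)^(2*(2*N+1))) * gb (2*N) (k+1)
          + (X:R)^(2*(2*N-k)) * gb (2*N) k) := by
      rw [hqdef, h2N, gb_step (2*N) k]
    rw [hstep, hqdef, hqdef, hqdef]
    have e2 := id2 k
    have e42 : 2*(2*N+1) = 4*N+2 := by ring
    rw [e42]
    calc (X:R)^(ee (N+1) (k+2)) *
          ((X:R)^(2*(k+2)) * gb (2*N) (k+2) + (1 + (X:R)^(4*N+2)) * gb (2*N) (k+1)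
            + (X:R)^(2*(2*N-k)) * gb (2*N) k)
        = ((X:R)^(ee (N+1) (k+2)) * (X:R)^(2*(k+2))) * gb (2*N) (k+2)
          + (1 + (X:R)^(4*N+2)) * ((X:R)^(ee (N+1) (k+2)) * gb (2*N) (k+1))
          + ((X:R)^(ee (N+1) (k+2)) * (X:R)^(2*(2*N-k))) * gb (2*N) k := by ring
      _ = _ := by
          rw [id1 k, id3 k hk', e2]
          ring
  -- shifted sums
  have hzero1 : hq N (2*N+1) = 0 := by
    rw [hqdef, gb_eq_zero (2*N) (2*N+1) (by omega)]; ring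
  have hzero2 : hq N (2*N+1+1) = 0 := by
    rw [hqdef, gb_eq_zero (2*N) (2*N+1+1) (by omega)]; ring
  have a1 := Finset.sum_range_succ' (hq N) (2*N+1)
  have a2 := Finset.sum_range_succ (hq N) (2*N+1)
  have s1 : ∑ k ∈ range (2*N+1), hq N (k+1) = (∑ k ∈ range (2*N+1), hq N k) - hq N 0 := by
    linear_combination a2 - a1 + hzero1
  have b1 := Finset.sum_range_succ' (fun k => hq N (k+1)) (2*N+1)
  have b2 := Finset.sum_range_succ (fun k => hq N (k+1)) (2*N+1)
  have s2 : ∑ k ∈ range (2*N+1), hq N (k+2) = (∑ k ∈ range (2*N+1), hq N k) - hq N 0 - hq N 1 := by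
    have : ∑ k ∈ range (2*N+1), hq N (k+1+1) = ∑ k ∈ range (2*N+1), hq N (k+2) := by
      refine Finset.sum_congr rfl fun k _ => rfl
    linear_combination b2 - b1 + hzero2 + this + s1
  -- edge terms
  have q0 : (X:R)^(ee (N+1) 0) = (X:R)^(2*N+1) * (X:R)^(ee N 0) := by
    rw [← pow_add]
    congr 1
    have : ((ee (N+1) 0 : ℕ) : ℤ) = ((2*N+1 + ee N 0 : ℕ) : ℤ) := by
      push_cast [ee_cast]; ring
    exact_mod_cast this
  have q1 : (X:R)^(ee (N+1) 1) = (X:R)^(ee N 0) := by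
    congr 1
    have : ((ee (N+1) 1 : ℕ) : ℤ) = ((ee N 0 : ℕ) : ℤ) := by
      rw [ee_cast, ee_cast]; push_cast; ring
    exact_mod_cast this
  have q2 : (X:R)^(2*N+1) * (X:R)^(ee N 1) = (X:R)^(ee N 0) * (X:R)^2 := by
    rw [← pow_add, ← pow_add]
    congr 1
    have : ((2*N+1 + ee N 1 : ℕ) : ℤ) = ((ee N 0 + 2 : ℕ) : ℤ) := by
      push_cast [ee_cast]; ring
    exact_mod_cast this
  have hF1 : hq (N+1) 1 = (X:R)^(ee N 0) * (1 + (X:R)^(4*N+2) + (X:R)^2 * gb (2*N) 1) := by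
    rw [hqdef, h2N, q1, gb_edge]
  have hF0 : hq (N+1) 0 = (X:R)^(2*N+1) * (X:R)^(ee N 0) := by
    rw [hqdef, gb_zero_right, q0]; ring
  have hh0 : hq N 0 = (X:R)^(ee N 0) := by
    rw [hqdef, gb_zero_right]; ring
  have hh1 : hq N 1 = (X:R)^(ee N 1) * gb (2*N) 1 := rfl
  have p : ((X:R)^(2*N+1))^2 = (X:R)^(4*N+2) := by
    rw [← pow_mul]; congr 1; omega
  rw [peel, hsum, s1, s2, hF1, hF0, hh0, hh1]
  linear_combination (- gb (2*N) 1) * q2 - (∑ k ∈ range (2*N+1), hq N k) * p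

lemma jtp : ∀ N, PM N ^ 2 = ∑ k ∈ range (2*N+1), hq N k := by
  intro N
  induction N with
  | zero =>
    have h0 : hq 0 0 = 1 := by
      have : ee 0 0 = 0 := by simp [ee]
      rw [hq, this, gb_zero_right]
      simp
    simp [PM, h0]
  | succ N ih =>
    have hPM : PM (N+1) ^ 2 = (1 + (X:R)^(2*N+1))^2 * PM N ^ 2 := by
      rw [PM, prod_range_succ, ← PM]; ring
    have hr : 2*(N+1)+1 = 2*N+1+1+1 := by ring
    rw [hPM, ih, hr, key]


lemma Ek_sub_PB {k : ℕ} (hk : 1 ≤ k) {n M : ℕ} (hM : n + 1 ≤ M) :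
    (X:R)^(n+1) ∣ Ek ℚ k - PB k M := by
  rw [dvd_iff_coeff]
  intro i hi
  rw [coeff_Ek]
  have h := PB_stab (k := k) hk i (le_refl (i+1)) (show i + 1 ≤ M by omega)
  exact ((dvd_iff_coeff.mp h) i le_rfl).symm

lemma abs_le_of_sq_le {d : ℤ} {n : ℕ} (h : d^2 ≤ (n:ℤ)) : |d| ≤ (n:ℤ) := by
  nlinarith [sq_abs d, abs_nonneg d]

/-- coefficient computation for the partial theta sum -/
lemma coeff_partial_theta (N i : ℕ) (hiN : i ≤ N) :
    PowerSeries.coeff i (∑ k ∈ range (2*N+1), (X:R)^(ee N k))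
      = PowerSeries.coeff i theta10 := by
  rw [map_sum]
  simp only [PowerSeries.coeff_X_pow]
  rw [Finset.sum_boole]
  rw [theta10, PowerSeries.coeff_mk]
  congr 1
  -- card of filter = ncard
  set s : Finset ℕ := (range (2*N+1)).filter (fun k => i = ee N k) with hs
  have hset : {j : ℤ | j ^ 2 = (i:ℤ)} = ↑(s.image (fun k : ℕ => (k:ℤ) - N)) := by
    ext j
    simp only [Set.mem_setOf_eq, Finset.coe_image, Set.mem_image, Finset.mem_coe,
      Finset.mem_filter, Finset.mem_range, hs]
    constructor
    · intro hj
      have habs : |j| ≤ (i:ℤ) := abs_le_of_sq_le (le_of_eq hj)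
      have hiN' : (i:ℤ) ≤ (N:ℤ) := by exact_mod_cast hiN
      obtain ⟨h1, h2⟩ := abs_le.mp (le_trans habs hiN')
      have htn : (((j + N).toNat : ℤ)) = j + N := Int.toNat_of_nonneg (by omega)
      refine ⟨(j + N).toNat, ⟨?_, ?_⟩, ?_⟩
      · omega
      · have : ((ee N ((j + N).toNat) : ℕ) : ℤ) = (i:ℤ) := by
          rw [ee_cast, htn, ← hj]; ring
        exact_mod_cast this.symm
      · rw [htn]; ring
    · rintro ⟨k, ⟨hk1, hk2⟩, rfl⟩
      have hc := ee_cast N k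
      rw [← hk2] at hc
      rw [show ((k:ℤ) - (N:ℤ))^2 = ((N:ℤ) - k)^2 by ring]
      exact hc.symm
  rw [hset, Set.ncard_coe_finset]
  rw [Finset.card_image_of_injective _ (fun a b hab => by omega)]

lemma lim_theta_partial : Lim (fun N => ∑ k ∈ range (2*N+1), (X:R)^(ee N k)) theta10 := by
  intro n
  refine ⟨n, fun N hN => ?_⟩
  rw [dvd_iff_coeff]
  intro i hi
  exact coeff_partial_theta N i (by omega)

/-- the core limit -/
lemma lim_core : Lim (fun N => PM N ^ 2 * Ek ℚ 2) theta10 := by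
  intro n
  refine ⟨2*n+2, fun N hN => ?_⟩
  have key : PM N ^ 2 * Ek ℚ 2 - theta10
      = (∑ k ∈ range (2*N+1), ((X:R)^(ee N k) * (gb (2*N) k * Ek ℚ 2) - (X:R)^(ee N k)))
        + ((∑ k ∈ range (2*N+1), (X:R)^(ee N k)) - theta10) := by
    rw [jtp N, Finset.sum_mul, Finset.sum_sub_distrib]
    have : ∀ k ∈ range (2*N+1), hq N k * Ek ℚ 2 = (X:R)^(ee N k) * (gb (2*N) k * Ek ℚ 2) := by
      intro k _
      rw [hq]; ring
    rw [Finset.sum_congr rfl this]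
    ring
  rw [key]
  refine dvd_add (Finset.dvd_sum fun k hk => ?_) ?_
  · rcases le_or_gt (n+1) (ee N k) with hbig | hsmall
    · have : (X:R)^(ee N k) * (gb (2*N) k * Ek ℚ 2) - (X:R)^(ee N k)
          = (X:R)^(ee N k) * (gb (2*N) k * Ek ℚ 2 - 1) := by ring
      rw [this]
      exact ((pow_dvd_pow _ hbig).mul_right _)
    · -- ee N k ≤ n, so N - n ≤ k ≤ N + n
      have hkmem := Finset.mem_range.mp hk
      have hsml : ee N k ≤ n := by omega
      have hd : ((N:ℤ) - k)^2 ≤ (n:ℤ) := by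
        rw [← ee_cast]; exact_mod_cast hsml
      have habs : |(N:ℤ) - k| ≤ (n:ℤ) := abs_le_of_sq_le hd
      have hk1 : N - n ≤ k ∧ k ≤ N + n := by
        cases abs_le.mp habs with
        | intro h1 h2 => omega
      have hkub : k ≤ 2*N := by omega
      have hklb : n + 1 ≤ k := by omega
      -- gb (2N) k * E2 - 1 divisible
      have d1 : (X:R)^(n+1) ∣ Ek ℚ 2 - PB 2 k := Ek_sub_PB (by norm_num) (by omega)
      have d2 : (X:R)^(n+1) ∣ (∏ i ∈ range k, (1 - (X:R)^(2*(2*N-k+1+i)))) - 1 := by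
        have := prod_stab (fun i => 1 - (X:R)^(2*(2*N-k+1+i))) n 0
          (fun j _ => by
            have hexp : n + 1 ≤ 2*(2*N-k+1+j) := by omega
            have : (1 - (X:R)^(2*(2*N-k+1+j))) - 1 = -(X:R)^(2*(2*N-k+1+j)) := by ring
            rw [this]
            exact (pow_dvd_pow _ hexp).neg_right) k (Nat.zero_le k)
        simpa using this
      have hbox := gb_box (2*N) k hkub
      have dcomb : (X:R)^(n+1) ∣ gb (2*N) k * Ek ℚ 2 - 1 := by
        have expand : gb (2*N) k * Ek ℚ 2 - 1
            = gb (2*N) k * (Ek ℚ 2 - PB 2 k)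
              + (gb (2*N) k * (∏ i ∈ range k, (1 - (X:R)^(2*(i+1))))
                  - ∏ i ∈ range k, (1 - (X:R)^(2*(2*N-k+1+i))))
              + ((∏ i ∈ range k, (1 - (X:R)^(2*(2*N-k+1+i)))) - 1) := by
          rw [PB]; ring
        rw [expand, hbox]
        refine dvd_add (dvd_add (d1.mul_left _) (by simp)) d2
      have : (X:R)^(ee N k) * (gb (2*N) k * Ek ℚ 2) - (X:R)^(ee N k)
          = (X:R)^(ee N k) * (gb (2*N) k * Ek ℚ 2 - 1) := by ring
      rw [this]
      exact dcomb.mul_left _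
  · rw [dvd_iff_coeff]
    intro i hi
    exact coeff_partial_theta N i (by omega)


-- ===== assembly =====

lemma lim_PB1 : Lim (fun N => PB 1 (2*N)) (Ek ℚ 1) :=
  (lim_PB (by norm_num)).comp (fun N => 2*N) (fun N => by show N ≤ 2*N; omega)

lemma lim_PB2 : Lim (PB 2) (Ek ℚ 2) := lim_PB (by norm_num)

lemma lim_PB22 : Lim (fun N => PB 2 (2*N)) (Ek ℚ 2) :=
  lim_PB2.comp (fun N => 2*N) (fun N => by show N ≤ 2*N; omega)

lemma lim_PB4 : Lim (PB 4) (Ek ℚ 4) := lim_PB (by norm_num)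

lemma seq_eq (N : ℕ) :
    PM N ^ 2 * Ek ℚ 2 * (PB 1 (2*N))^2 * (PB 4 N)^2
      = Ek ℚ 2 * (PB 2 N * PB 2 (2*N))^2 := by
  calc PM N ^ 2 * Ek ℚ 2 * (PB 1 (2*N))^2 * (PB 4 N)^2
      = Ek ℚ 2 * ((PO N * PM N) * PB 2 N * PB 4 N)^2 := by rw [split1]; ring
    _ = Ek ℚ 2 * (PT N * PB 2 N * PB 4 N)^2 := by rw [split3]
    _ = Ek ℚ 2 * ((PB 4 N * PT N) * PB 2 N)^2 := by ring
    _ = Ek ℚ 2 * (PB 2 N * PB 2 (2*N))^2 := by rw [← split2]; ring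

lemma mainPS : theta10 * Ek ℚ 1 ^ 2 * Ek ℚ 4 ^ 2 = Ek ℚ 2 ^ 5 := by
  have hL : Lim (fun N => PM N ^ 2 * Ek ℚ 2 * (PB 1 (2*N))^2 * (PB 4 N)^2)
      (theta10 * Ek ℚ 1 ^ 2 * Ek ℚ 4 ^ 2) :=
    (lim_core.mul (lim_PB1.pow 2)).mul (lim_PB4.pow 2)
  have hR : Lim (fun N => Ek ℚ 2 * (PB 2 N * PB 2 (2*N))^2)
      (Ek ℚ 2 * (Ek ℚ 2 * Ek ℚ 2)^2) :=
    (Lim.const (Ek ℚ 2)).mul ((lim_PB2.mul lim_PB22).pow 2)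
  have h := (hL.congr seq_eq).unique hR
  rw [h]; ring

lemma Ek_ne_zero {k : ℕ} (hk : 1 ≤ k) : Ek ℚ k ≠ 0 := by
  intro h
  have h0 : PowerSeries.coeff 0 (Ek ℚ k) = 1 := by
    rw [coeff_Ek]
    have : PB k 1 = 1 - (X:R)^(k*1) := by
      rw [PB, Finset.prod_range_one]
    rw [this, map_sub, PowerSeries.coeff_one, PowerSeries.coeff_X_pow]
    rw [if_pos rfl, if_neg (by omega), sub_zero]
  rw [h, map_zero] at h0
  exact zero_ne_one h0

end Theta10Proof

open Theta10Proof in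
/-- θ_{1,0}(q) = (q²;q²)_∞^5 / ((q;q)_∞² (q⁴;q⁴)_∞²). -/
theorem theta10_eq_eta_quotient :
    toL theta10 = EL 2 ^ 5 / (EL 1 ^ 2 * EL 4 ^ 2) := by
  have inj : Function.Injective (HahnSeries.ofPowerSeries ℤ ℚ) :=
    HahnSeries.ofPowerSeries_injective
  have h1 : EL 1 ≠ 0 := fun h => Ek_ne_zero (k := 1) (by norm_num) (inj (by rw [map_zero]; exact h))
  have h4 : EL 4 ≠ 0 := fun h => Ek_ne_zero (k := 4) (by norm_num) (inj (by rw [map_zero]; exact h))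
  have hden : EL 1 ^ 2 * EL 4 ^ 2 ≠ 0 :=
    mul_ne_zero (pow_ne_zero _ h1) (pow_ne_zero _ h4)
  rw [eq_div_iff hden]
  have := congrArg (HahnSeries.ofPowerSeries ℤ ℚ) mainPS
  rw [map_mul, map_mul, map_pow, map_pow, map_pow] at this
  unfold toL EL
  linear_combination this
end

section
/- The theta value θ_{2,1}(q) := ∑_{n∈ℤ} q^{(4n+1)^2/8} satisfies ∑_{n∈ℤ} q^{2n^2+n} = (q^2;q^2)_∞^2/(q;q)_∞ as formal power series. -/
open PowerSeries Finset

/-- ∑_{n ∈ ℤ} q^{2n²+n}: its m-th coefficient is the number of integers n with 2n²+n = m. -/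
noncomputable def theta21core : PowerSeries ℚ :=
  PowerSeries.mk fun m => ({n : ℤ | 2 * n ^ 2 + n = (m : ℤ)}.ncard : ℚ)

namespace Theta21

noncomputable abbrev A : Type := PowerSeries ℚ

def MD (m : ℕ) (f g : A) : Prop := (PowerSeries.X : A) ^ m ∣ (f - g)

lemma MD.refl (m : ℕ) (f : A) : MD m f f := by simp [MD]

lemma MD.symm {m f g} (h : MD m f g) : MD m g f := by
  simpa [MD, neg_sub] using (dvd_neg.mpr h)

lemma MD.trans {m f g h} (h1 : MD m f g) (h2 : MD m g h) : MD m f h := by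
  have := dvd_add h1 h2
  simpa [MD, sub_add_sub_cancel] using this

lemma MD.mul {m f g h k} (h1 : MD m f g) (h2 : MD m h k) : MD m (f * h) (g * k) := by
  have e : f * h - g * k = h * (f - g) + g * (h - k) := by ring
  rw [MD, e]
  exact dvd_add (Dvd.dvd.mul_left h1 h) (Dvd.dvd.mul_left h2 g)

lemma MD.mono {a b : ℕ} {f g} (hab : a ≤ b) (h : MD b f g) : MD a f g :=
  dvd_trans (pow_dvd_pow _ hab) h

lemma MD.sum {m : ℕ} {s : Finset ℕ} {f g : ℕ → A} (h : ∀ i ∈ s, MD m (f i) (g i)) :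
    MD m (∑ i ∈ s, f i) (∑ i ∈ s, g i) := by
  rw [MD, ← Finset.sum_sub_distrib]
  exact Finset.dvd_sum fun i hi => h i hi

lemma MD.prod_one {m : ℕ} {s : Finset ℕ} {f : ℕ → A} (h : ∀ i ∈ s, MD m (f i) 1) :
    MD m (∏ i ∈ s, f i) 1 := by
  classical
  induction s using Finset.cons_induction with
  | empty => exact MD.refl _ _
  | cons a s ha ih =>
    rw [Finset.prod_cons]
    have h1 := h a (Finset.mem_cons_self a s)
    have h2 := ih fun i hi => h i (Finset.mem_cons_of_mem hi)
    simpa using h1.mul h2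

lemma MD_one_sub_pow {m k : ℕ} (hk : m ≤ k) : MD m (1 - (PowerSeries.X : A) ^ k) 1 := by
  have e : (1 - (PowerSeries.X : A) ^ k) - 1 = -(X ^ k) := by ring
  rw [MD, e]
  exact (pow_dvd_pow _ hk).neg_right

lemma MD.coeff {m : ℕ} {f g : A} (h : MD m f g) {l : ℕ} (hl : l < m) :
    PowerSeries.coeff l f = PowerSeries.coeff l g := by
  have h2 := (PowerSeries.X_pow_dvd_iff.mp h) l hl
  rw [map_sub] at h2
  linarith [h2]

lemma MD_of_coeff {m : ℕ} {f g : A}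
    (h : ∀ l < m, PowerSeries.coeff l f = PowerSeries.coeff l g) : MD m f g := by
  rw [MD, PowerSeries.X_pow_dvd_iff]
  intro l hl
  rw [map_sub, h l hl, sub_self]

lemma MD.of_unit_mul {m : ℕ} {v f g : A} (hv : IsUnit v) (h : MD m (v * f) (v * g)) :
    MD m f g := by
  rw [MD] at h ⊢
  have e : v * f - v * g = v * (f - g) := by ring
  rw [e] at h
  exact (hv.dvd_mul_left).mp h

/-- truncated Pochhammer product `(t;t)_r` -/
noncomputable def Pt (t : A) (r : ℕ) : A := ∏ i ∈ range r, (1 - t ^ (i + 1))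

@[simp] lemma Pt_zero (t : A) : Pt t 0 = 1 := Finset.prod_range_zero _

lemma Pt_succ (t : A) (r : ℕ) : Pt t (r + 1) = Pt t r * (1 - t ^ (r + 1)) :=
  Finset.prod_range_succ _ _

lemma Pt_add (t : A) (a b : ℕ) :
    Pt t (a + b) = Pt t a * ∏ i ∈ range b, (1 - t ^ (a + i + 1)) := by
  rw [Pt, Finset.prod_range_add]
  rfl

noncomputable def gb (t : A) : ℕ → ℕ → A
  | _, 0 => 1
  | 0, _ + 1 => 0
  | m + 1, k + 1 => gb t m k + t ^ (k + 1) * gb t m (k + 1)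

@[simp] lemma gb_zero_right (t : A) (m : ℕ) : gb t m 0 = 1 := by cases m <;> rfl
@[simp] lemma gb_zero_succ (t : A) (k : ℕ) : gb t 0 (k + 1) = 0 := rfl
lemma gb_pascalA (t : A) (m k : ℕ) :
    gb t (m + 1) (k + 1) = gb t m k + t ^ (k + 1) * gb t m (k + 1) := rfl

lemma gb_eq_zero (t : A) : ∀ m k, m < k → gb t m k = 0 := by
  intro m
  induction m with
  | zero => intro k hk; cases k with | zero => omega | succ k => rfl
  | succ m ih =>
    intro k hk
    cases k with
    | zero => omega
    | succ k =>
      rw [gb_pascalA, ih k (by omega), ih (k+1) (by omega)]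
      ring

@[simp] lemma gb_diag (t : A) : ∀ m, gb t m m = 1 := by
  intro m
  induction m with
  | zero => rfl
  | succ m ih => rw [gb_pascalA, ih, gb_eq_zero t m (m+1) (by omega)]; ring

lemma gb_pascalB (t : A) : ∀ m k, gb t (m + 1) (k + 1) = t ^ (m - k) * gb t m k + gb t m (k + 1) := by
  intro m
  induction m with
  | zero =>
    intro k
    cases k with
    | zero => simp [gb_pascalA t 0 0, gb_pascalA t 0 1]
    | succ k => simp [gb_pascalA t 0 (k+1), gb_pascalA t 0 (k+2)]
  | succ m ih =>
    intro k
    cases k with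
    | zero =>
      have h1 := gb_pascalA t (m+1) 0
      have hI := ih 0
      have hA := gb_pascalA t m 0
      simp only [gb_zero_right, Nat.sub_zero, pow_one, mul_one] at h1 hI hA ⊢
      linear_combination h1 + t * hI - hA
    | succ k =>
      by_cases hk : k + 1 ≤ m
      · have h1 := gb_pascalA t (m+1) (k+1)
        have h2 := ih k
        have h3 := ih (k+1)
        have h4 := gb_pascalA t m k
        have h5 := gb_pascalA t m (k+1)
        have e3 : m + 1 - (k + 1) = m - (k+1) + 1 := by omega
        have e4 : m - k = m - (k+1) + 1 := by omega
        rw [e3]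
        rw [e4] at h2
        linear_combination h1 + h2 + t^(k+2) * h3 - t^(m-(k+1)+1) * h4 - h5
      · by_cases hk2 : k ≤ m
        · have hkm : k = m := by omega
          subst hkm
          rw [gb_eq_zero t (k+1) (k+1+1) (by omega), gb_diag, gb_diag]
          have h0 : k + 1 - (k + 1) = 0 := by omega
          rw [h0]
          ring
        · rw [gb_eq_zero t (m+1) (k+1) (by omega), gb_eq_zero t (m+1) (k+1+1) (by omega),
            gb_eq_zero t (m+1+1) (k+1+1) (by omega)]
          ring

lemma gb_mul (t : A) : ∀ m k, k ≤ m → gb t m k * Pt t k * Pt t (m - k) = Pt t m := by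
  intro m
  induction m with
  | zero =>
    intro k hk
    have : k = 0 := by omega
    subst this
    simp [Pt]
  | succ m ih =>
    intro k hk
    cases k with
    | zero =>
      simp only [gb_zero_right, one_mul, Nat.sub_zero, Pt_zero]
    | succ k =>
      by_cases hkm : k + 1 ≤ m
      · have e1 : m + 1 - (k + 1) = (m - (k+1)) + 1 := by omega
        have e2 : m - k = (m - (k+1)) + 1 := by omega
        rw [gb_pascalA, e1, Pt_succ t k, Pt_succ t (m - (k+1)), Pt_succ t m]
        have ih1 := ih k (by omega)
        have ih2 := ih (k+1) (by omega)
        rw [e2] at ih1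
        rw [Pt_succ t k] at ih2
        rw [Pt_succ t (m - (k+1))] at ih1
        have e3 : m + 1 = (k + 1) + (m - (k+1) + 1) := by omega
        rw [e3]
        linear_combination (1 - t^(k+1)) * ih1 + t^(k+1) * (1 - t^(m - (k+1) + 1)) * ih2
      · have : k = m := by omega
        subst this
        simp only [gb_diag, one_mul, Nat.sub_self, Pt_zero, mul_one]
lemma Pt_constantCoeff (c r : ℕ) (hc : 1 ≤ c) :
    PowerSeries.constantCoeff (Pt ((X:A)^c) r) = 1 := by
  rw [Pt, map_prod]
  apply Finset.prod_eq_one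
  intro i _
  rw [← pow_mul, map_sub, map_one, map_pow, PowerSeries.constantCoeff_X]
  rw [zero_pow (Nat.mul_ne_zero (by omega) (Nat.succ_ne_zero i))]
  ring

lemma Pt_ne_zero (c r : ℕ) (hc : 1 ≤ c) : Pt ((X:A)^c) r ≠ 0 := by
  intro h
  have := Pt_constantCoeff c r hc
  rw [h, map_zero] at this
  exact zero_ne_one this

lemma Pt_isUnit (c r : ℕ) (hc : 1 ≤ c) : IsUnit (Pt ((X:A)^c) r) := by
  rw [PowerSeries.isUnit_iff_constantCoeff, Pt_constantCoeff c r hc]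
  exact isUnit_one

lemma gb_tail (c : ℕ) (hc : 1 ≤ c) (m k : ℕ) (hk : k ≤ m) :
    gb ((X:A)^c) m k * Pt ((X:A)^c) (m - k) = ∏ i ∈ range (m - k), (1 - ((X:A)^c) ^ (k + i + 1)) := by
  apply mul_left_cancel₀ (Pt_ne_zero c k hc)
  have h1 := gb_mul ((X:A)^c) m k hk
  have h2 : Pt ((X:A)^c) m = Pt ((X:A)^c) k * ∏ i ∈ range (m - k), (1 - ((X:A)^c) ^ (k + i + 1)) := by
    have := Pt_add ((X:A)^c) k (m - k)
    rw [show k + (m - k) = m from by omega] at this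
    exact this
  rw [← h2]
  linear_combination h1

lemma gb_symm (c : ℕ) (hc : 1 ≤ c) (m k : ℕ) (hk : k ≤ m) :
    gb ((X:A)^c) m k = gb ((X:A)^c) m (m - k) := by
  have h1 := gb_mul ((X:A)^c) m k hk
  have h2 := gb_mul ((X:A)^c) m (m - k) (by omega)
  rw [show m - (m-k) = k from by omega] at h2
  have h3 : gb ((X:A)^c) m k * (Pt ((X:A)^c) k * Pt ((X:A)^c) (m-k))
      = gb ((X:A)^c) m (m-k) * (Pt ((X:A)^c) k * Pt ((X:A)^c) (m-k)) := by
    linear_combination h1 - h2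
  exact mul_right_cancel₀ (by
    exact mul_ne_zero (Pt_ne_zero c k hc) (Pt_ne_zero c (m-k) hc)) h3

/-- the key congruence : `(t;t)_n * gb(2n, i) ≡ 1 mod X^(4 min(i,2n-i)+4)` for `t = X^4`. -/
lemma gb_congr (n i : ℕ) (hi : i ≤ 2*n) :
    MD (4 * (min i (2*n - i)) + 4) (Pt ((X:A)^4) n * gb ((X:A)^4) (2*n) i) 1 := by
  have main : ∀ j, j ≤ n → MD (4*j+4) (Pt ((X:A)^4) n * gb ((X:A)^4) (2*n) j) 1 := by
    intro j hj
    have htail := gb_tail 4 (by norm_num) (2*n) j (by omega)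
    have hsplit : Pt ((X:A)^4) (2*n - j) = Pt ((X:A)^4) n * ∏ r ∈ range (n - j), (1 - ((X:A)^4) ^ (n + r + 1)) := by
      have := Pt_add ((X:A)^4) n (n - j)
      rw [show n + (n - j) = 2*n - j from by omega] at this
      exact this
    -- gb * Pt n * T2 = T1
    have key : gb ((X:A)^4) (2*n) j * (Pt ((X:A)^4) n * ∏ r ∈ range (n - j), (1 - ((X:A)^4) ^ (n + r + 1)))
        = ∏ r ∈ range (2*n - j), (1 - ((X:A)^4) ^ (j + r + 1)) := by
      rw [← hsplit]; exact htail
    have hT1 : MD (4*j+4) (∏ r ∈ range (2*n - j), (1 - ((X:A)^4) ^ (j + r + 1))) 1 := by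
      apply MD.prod_one
      intro r _
      rw [← pow_mul]
      exact MD_one_sub_pow (by nlinarith)
    have hT2 : MD (4*j+4) (∏ r ∈ range (n - j), (1 - ((X:A)^4) ^ (n + r + 1))) 1 := by
      apply MD.prod_one
      intro r _
      rw [← pow_mul]
      exact MD_one_sub_pow (by nlinarith)
    have step1 : MD (4*j+4) (Pt ((X:A)^4) n * gb ((X:A)^4) (2*n) j)
        (gb ((X:A)^4) (2*n) j * (Pt ((X:A)^4) n * ∏ r ∈ range (n - j), (1 - ((X:A)^4) ^ (n + r + 1)))) := by
      have h0 : MD (4*j+4) (Pt ((X:A)^4) n * gb ((X:A)^4) (2*n) j)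
          ((Pt ((X:A)^4) n * gb ((X:A)^4) (2*n) j) * ∏ r ∈ range (n - j), (1 - ((X:A)^4) ^ (n + r + 1))) := by
        have := (MD.refl (4*j+4) (Pt ((X:A)^4) n * gb ((X:A)^4) (2*n) j)).mul hT2.symm
        simpa using this
      have e : (Pt ((X:A)^4) n * gb ((X:A)^4) (2*n) j) * ∏ r ∈ range (n - j), (1 - ((X:A)^4) ^ (n + r + 1))
          = gb ((X:A)^4) (2*n) j * (Pt ((X:A)^4) n * ∏ r ∈ range (n - j), (1 - ((X:A)^4) ^ (n + r + 1))) := by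
        ring
      rwa [e] at h0
    rw [key] at step1
    exact step1.trans hT1
  by_cases hin : i ≤ n
  · have h := main i hin
    have : min i (2*n - i) = i := by omega
    rwa [this]
  · have hsym := gb_symm 4 (by norm_num) (2*n) i hi
    have h := main (2*n - i) (by omega)
    have : min i (2*n - i) = 2*n - i := by omega
    rw [this, hsym]
    exact h
lemma gb_mixed (t : A) (n j : ℕ) :
    gb t (2 * n + 2) (j + 2) =
      t ^ (2 * n - j) * gb t (2 * n) j + (1 + t ^ (2 * n + 1)) * gb t (2 * n) (j + 1)
        + t ^ (j + 2) * gb t (2 * n) (j + 2) := by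
  have h1 : gb t (2*n+2) (j+2) = t ^ (2*n+1-(j+1)) * gb t (2*n+1) (j+1) + gb t (2*n+1) (j+2) :=
    gb_pascalB t (2*n+1) (j+1)
  have h2 : gb t (2*n+1) (j+1) = gb t (2*n) j + t ^ (j+1) * gb t (2*n) (j+1) := gb_pascalA t (2*n) j
  have h3 : gb t (2*n+1) (j+2) = gb t (2*n) (j+1) + t ^ (j+2) * gb t (2*n) (j+2) :=
    gb_pascalA t (2*n) (j+1)
  by_cases hj : j ≤ 2*n
  · have e1 : 2*n+1-(j+1) = 2*n-j := by omega
    have e2 : 2*n+1 = (2*n-j) + (j+1) := by omega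
    rw [h1, h2, h3, e1, e2]
    ring
  · rw [gb_eq_zero t (2*n) j (by omega), gb_eq_zero t (2*n) (j+1) (by omega),
      gb_eq_zero t (2*n) (j+2) (by omega), gb_eq_zero t (2*n+2) (j+2) (by omega)]
    ring

/-- squared distance exponent -/
def w (n i : ℕ) : ℕ := ((((n:ℤ) - i))^2).toNat
def u (n i : ℕ) : ℕ := 2 * w n i + i

lemma w_val (n i : ℕ) : (w n i : ℤ) = ((n:ℤ) - i)^2 := by
  unfold w; rw [Int.toNat_of_nonneg (sq_nonneg _)]

lemma U1 {n j : ℕ} (hj : j ≤ 2*n) : 4*(2*n-j) + u (n+1) (j+2) = (4*n+4) + u n j := by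
  have h1 := w_val (n+1) (j+2); have h2 := w_val n j
  push_cast at h1 h2
  have hr : ((n:ℤ) + 1 - ((j:ℤ)+2))^2 = ((n:ℤ) - j)^2 - 2*((n:ℤ) - j) + 1 := by ring
  unfold u; omega

lemma U2 (n j : ℕ) : u (n+1) (j+2) = 1 + u n (j+1) := by
  have h1 := w_val (n+1) (j+2); have h2 := w_val n (j+1)
  push_cast at h1 h2
  have hr : ((n:ℤ) + 1 - ((j:ℤ)+2))^2 = ((n:ℤ) - ((j:ℤ)+1))^2 := by ring
  unfold u; omega

lemma U3 (n j : ℕ) : 4*(j+2) + u (n+1) (j+2) = (4*n+2) + u n (j+2) := by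
  have h1 := w_val (n+1) (j+2); have h2 := w_val n (j+2)
  push_cast at h1 h2
  have hr : ((n:ℤ) - ((j:ℤ)+2))^2 = ((n:ℤ) + 1 - ((j:ℤ)+2))^2 - 2*((n:ℤ) + 1 - ((j:ℤ)+2)) + 1 := by
    ring
  unfold u; omega

lemma U4 (n : ℕ) : u (n+1) 0 = u n 0 + (4*n+2) := by
  have h1 := w_val (n+1) 0; have h2 := w_val n 0
  push_cast at h1 h2
  have hr : ((n:ℤ) + 1 - 0)^2 = ((n:ℤ) - 0)^2 + 2*(n:ℤ) + 1 := by ring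
  unfold u; omega

lemma U5 (n : ℕ) : u (n+1) 1 = u n 0 + 1 := by
  have h1 := w_val (n+1) 1; have h2 := w_val n 0
  push_cast at h1 h2
  have hr : ((n:ℤ) + 1 - 1)^2 = ((n:ℤ) - 0)^2 + 0 := by ring
  unfold u; omega

lemma U6 (n : ℕ) : u n 1 + (4*n+2) = u (n+1) 1 + 4 := by
  have h1 := w_val (n+1) 1; have h2 := w_val n 1
  push_cast at h1 h2
  have hr : ((n:ℤ) - 1)^2 = ((n:ℤ) + 1 - 1)^2 - 2*(n:ℤ) + 1 := by ring
  unfold u; omega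

noncomputable def c4 (n i : ℕ) : A := gb ((X:A)^4) (2*n) i * (X:A) ^ (u n i)

noncomputable def S (n : ℕ) : A := ∑ i ∈ range (2*n+1), c4 n i

lemma termwise (n j : ℕ) :
    c4 (n+1) (j+2) =
      c4 n (j+1) * ((X:A) + X^(8*n+5)) + c4 n (j+2) * X^(4*n+2) + c4 n j * X^(4*n+4) := by
  unfold c4
  rw [show 2*(n+1) = 2*n+2 from by ring, gb_mixed]
  by_cases hj : j ≤ 2*n
  · have hA1 : (X:A)^(4*(2*n-j)) * X^(u (n+1) (j+2)) = X^(4*n+4) * X^(u n j) := by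
      rw [← pow_add, ← pow_add]; congr 1; have := U1 hj; omega
    have hA2 : (X:A)^(u (n+1) (j+2)) = X * X^(u n (j+1)) := by
      rw [← pow_succ']; congr 1; have := U2 n j; omega
    have hA3 : (X:A)^(4*(j+2)) * X^(u (n+1) (j+2)) = X^(4*n+2) * X^(u n (j+2)) := by
      rw [← pow_add, ← pow_add]; congr 1; have := U3 n j; omega
    rw [← pow_mul, ← pow_mul, ← pow_mul]
    linear_combination (gb ((X:A)^4) (2*n) j) * hA1
      + (gb ((X:A)^4) (2*n) (j+1)) * (1 + (X:A)^(4*(2*n+1))) * hA2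
      + (gb ((X:A)^4) (2*n) (j+2)) * hA3
  · rw [gb_eq_zero _ (2*n) j (by omega), gb_eq_zero _ (2*n) (j+1) (by omega),
      gb_eq_zero _ (2*n) (j+2) (by omega)]
    ring

lemma bd0 (n : ℕ) : c4 (n+1) 0 = c4 n 0 * (X:A)^(4*n+2) := by
  unfold c4
  rw [show 2*(n+1) = 2*n+2 from by ring]
  rw [gb_zero_right, gb_zero_right, one_mul, one_mul, ← pow_add]
  congr 1
  have := U4 n; omega

lemma bd1 (n : ℕ) :
    c4 (n+1) 1 = c4 n 0 * ((X:A) + X^(8*n+5)) + c4 n 1 * X^(4*n+2) := by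
  unfold c4
  rw [show 2*(n+1) = 2*n+2 from by ring]
  have hgb : gb ((X:A)^4) (2*n+2) 1 =
      ((X:A)^4)^(2*n+1) + 1 + (X:A)^4 * gb ((X:A)^4) (2*n) 1 := by
    have hB := gb_pascalB ((X:A)^4) (2*n+1) 0
    have hA := gb_pascalA ((X:A)^4) (2*n) 0
    simp only [gb_zero_right, mul_one, pow_one, Nat.sub_zero, zero_add] at hB hA
    rw [hB, hA]
    ring
  rw [hgb]
  have e1 : (X:A)^(u (n+1) 1) = X^(u n 0) * X := by
    rw [← pow_succ]; congr 1; have := U5 n; omega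
  have e2 : ((X:A)^4)^(2*n+1) * X^(u (n+1) 1) = X^(u n 0) * X^(8*n+5) := by
    rw [← pow_mul, ← pow_add, ← pow_add]; congr 1; have := U5 n; omega
  have e3 : (X:A)^4 * X^(u (n+1) 1) = X^(u n 1) * X^(4*n+2) := by
    rw [← pow_add, ← pow_add]; congr 1; have := U6 n; omega
  simp only [gb_zero_right, one_mul]
  linear_combination e2 + e1 + gb ((X:A)^4) (2*n) 1 * e3

lemma c4_top (n i : ℕ) (h : 2*n < i) : c4 n i = 0 := by
  unfold c4; rw [gb_eq_zero _ (2*n) i h, zero_mul]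

lemma S_succ (n : ℕ) :
    S (n+1) = S n * ((X:A) + X^(4*n+2) + X^(4*n+4) + X^(8*n+5)) := by
  have hpad : ∀ m r, 2*m < r → (∑ i ∈ range r, c4 m i) = S m := by
    intro m r hr
    rw [S]
    refine (Finset.sum_subset ?_ ?_).symm
    · intro x hx; simp only [mem_range] at *; omega
    · intro x _ hx
      simp only [mem_range, not_lt] at hx
      exact c4_top m x (by omega)
  have lhs1 : S (n+1) = (∑ i ∈ range (2*n+1), c4 (n+1) (i+2)) + c4 (n+1) 1 + c4 (n+1) 0 := by
    rw [S, show 2*(n+1)+1 = (2*n+2)+1 from by ring, Finset.sum_range_succ',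
      Finset.sum_range_succ']
  rw [lhs1]
  have ht : (∑ i ∈ range (2*n+1), c4 (n+1) (i+2)) =
      (∑ i ∈ range (2*n+1), c4 n (i+1)) * ((X:A) + X^(8*n+5))
        + (∑ i ∈ range (2*n+1), c4 n (i+2)) * X^(4*n+2)
        + S n * X^(4*n+4) := by
    calc (∑ i ∈ range (2*n+1), c4 (n+1) (i+2))
        = ∑ i ∈ range (2*n+1), (c4 n (i+1) * ((X:A) + X^(8*n+5))
            + c4 n (i+2) * X^(4*n+2) + c4 n i * X^(4*n+4)) :=
          Finset.sum_congr rfl fun i _ => termwise n i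
      _ = _ := by
          rw [Finset.sum_add_distrib, Finset.sum_add_distrib, ← Finset.sum_mul,
            ← Finset.sum_mul, ← Finset.sum_mul, S]
  rw [ht]
  have h1 : (∑ i ∈ range (2*n+1), c4 n (i+1)) = S n - c4 n 0 := by
    have h := hpad n (2*n+2) (by omega)
    rw [Finset.sum_range_succ'] at h
    linear_combination h
  have h2 : (∑ i ∈ range (2*n+1), c4 n (i+2)) = S n - c4 n 0 - c4 n 1 := by
    have h := hpad n (2*n+3) (by omega)
    rw [Finset.sum_range_succ', Finset.sum_range_succ'] at h
    have h' : (∑ k ∈ range (2*n+1), c4 n (k+1+1)) = ∑ k ∈ range (2*n+1), c4 n (k+2) :=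
      Finset.sum_congr rfl fun k _ => by norm_num
    rw [h'] at h
    linear_combination h
  rw [h1, h2, bd0, bd1]
  ring

lemma jtp : ∀ n, (∏ k ∈ range n, ((1 + (X:A)^(4*k+3)) * ((X:A) + X^(4*k+2)))) = S n := by
  intro n
  induction n with
  | zero => simp [S, c4, u, w, gb_zero_right]
  | succ n ih =>
    rw [Finset.prod_range_succ, ih, S_succ]
    ring
noncomputable def Sf (n : ℕ) : A := ∑ i ∈ range (2*n+1), (X:A)^(u n i)

lemma u_ge (n i : ℕ) : n ≤ u n i := by
  have hw := w_val n i
  have hsq : (0:ℤ) ≤ (4*((n:ℤ)-i)-1)^2 := sq_nonneg _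
  have hex : (4*((n:ℤ)-i)-1)^2 = 16*((n:ℤ)-i)^2 - 8*((n:ℤ)-i) + 1 := by ring
  unfold u; omega

lemma theta_MD {n m : ℕ} (hmn : m < n) :
    MD (n+m+1) ((X:A)^n * theta21core) (Sf n) := by
  apply MD_of_coeff
  intro l hl
  rw [PowerSeries.coeff_X_pow_mul']
  have hS : PowerSeries.coeff l (Sf n)
      = (((range (2*n+1)).filter (fun i => l = u n i)).card : ℚ) := by
    rw [Sf, map_sum]
    rw [← Finset.sum_boole]
    apply Finset.sum_congr rfl
    intro i _
    rw [PowerSeries.coeff_X_pow]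
  rw [hS]
  by_cases hln : n ≤ l
  · rw [if_pos hln]
    rw [theta21core, PowerSeries.coeff_mk]
    have key : ∀ b : ℤ, 1 ≤ b → b ≤ b*b := fun b hb => le_mul_of_one_le_left (by omega) hb
    have hset : {a : ℤ | 2 * a ^ 2 + a = ((l - n : ℕ) : ℤ)}
        = ↑((Finset.Icc (-(n:ℤ)) (n:ℤ)).filter (fun a => 2 * a ^ 2 + a = ((l - n : ℕ) : ℤ))) := by
      ext a
      simp only [Set.mem_setOf_eq, Finset.coe_filter, Finset.mem_Icc, Set.mem_setOf_eq]
      constructor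
      · intro ha
        refine ⟨⟨?_, ?_⟩, ha⟩
        · by_contra hcon
          push_neg at hcon
          have hb : 1 ≤ -a := by omega
          have h2 := key (-a) hb
          have ha2 : (-a) * (-a) = a^2 := by ring
          have hc : ((l - n : ℕ) : ℤ) ≤ m := by
            have : l - n ≤ m := by omega
            exact_mod_cast this
          have hsq : a^2 = a*a := by ring
          -- 2a^2 + a = 2b^2 - b with b = -a ≥ 1
          nlinarith [h2, ha, hc, hmn]
        · by_contra hcon
          push_neg at hcon
          have hb : 1 ≤ a := by omega
          have h2 := key a hb
          have hc : ((l - n : ℕ) : ℤ) ≤ m := by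
            have : l - n ≤ m := by omega
            exact_mod_cast this
          nlinarith [h2, ha, hc, hmn]
      · exact fun h => h.2
    rw [hset, Set.ncard_coe_finset]
    congr 1
    apply Finset.card_bij' (fun a _ => (a + (n:ℤ)).toNat) (fun i _ => (i : ℤ) - n)
    · intro a ha
      simp only [Finset.mem_filter, Finset.mem_Icc] at ha
      obtain ⟨⟨h1, h2⟩, heq⟩ := ha
      simp only [Finset.mem_filter, Finset.mem_range]
      constructor
      · omega
      · have hw := w_val n ((a + (n:ℤ)).toNat)
        have e : ((n:ℤ) - ((a + (n:ℤ)).toNat : ℤ)) = -a := by omega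
        rw [e] at hw
        have hneg : (-a)^2 = a^2 := by ring
        rw [hneg] at hw
        have hcast : ((l - n : ℕ) : ℤ) = (l:ℤ) - n := by omega
        rw [hcast] at heq
        unfold u
        omega
    · intro i hi
      simp only [Finset.mem_filter, Finset.mem_range] at hi
      obtain ⟨hir, hieq⟩ := hi
      simp only [Finset.mem_filter, Finset.mem_Icc]
      have hw := w_val n i
      have hrel : ((n:ℤ) - i)^2 = ((i:ℤ) - n)^2 := by ring
      rw [hrel] at hw
      unfold u at hieq
      refine ⟨⟨by omega, by omega⟩, ?_⟩
      have hcast : ((l - n : ℕ) : ℤ) = (l:ℤ) - n := by omega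
      rw [hcast]
      have hape : ((i:ℤ) - n)^2 = ((i:ℤ)-n)*((i:ℤ)-n) := by ring
      -- from hieq : l = 2 * w n i + i
      omega
    · intro a ha
      simp only [Finset.mem_filter, Finset.mem_Icc] at ha
      omega
    · intro i hi
      simp only [Finset.mem_filter, Finset.mem_range] at hi
      omega
  · rw [if_neg hln]
    have : ((range (2*n+1)).filter (fun i => l = u n i)) = ∅ := by
      apply Finset.filter_eq_empty_iff.mpr
      intro i _
      have := u_ge n i
      omega
    rw [this]
    simp
lemma Ek_MD (c : ℕ) (hc : 1 ≤ c) {m L : ℕ} (hL : m ≤ L) :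
    MD m (Ek ℚ c) (Pt ((X:A)^c) L) := by
  apply MD_of_coeff
  intro l hl
  have hq : ∀ r : ℕ, (∏ k ∈ range r, (1 - (X:A)^c * ((X:A)^c) ^ k)) = Pt ((X:A)^c) r := by
    intro r
    rw [Pt]
    apply Finset.prod_congr rfl
    intro k _
    rw [← pow_succ']
  have hEk : PowerSeries.coeff l (Ek ℚ c) = PowerSeries.coeff l (Pt ((X:A)^c) (l+1)) := by
    rw [Ek, qPoch, PowerSeries.coeff_mk, hq]
  rw [hEk]
  -- now compare Pt (l+1) with Pt L using that the extra factors are ≡ 1 mod X^(l+1)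
  have hstab : MD (l+1) (Pt ((X:A)^c) L) (Pt ((X:A)^c) (l+1)) := by
    have hsplit := Pt_add ((X:A)^c) (l+1) (L - (l+1))
    rw [show (l+1) + (L - (l+1)) = L from by omega] at hsplit
    rw [hsplit]
    have h1 : MD (l+1) (∏ i ∈ range (L - (l+1)), (1 - ((X:A)^c) ^ (l+1 + i + 1))) 1 := by
      apply MD.prod_one
      intro i _
      rw [← pow_mul]
      exact MD_one_sub_pow (by nlinarith)
    have := (MD.refl (l+1) (Pt ((X:A)^c) (l+1))).mul h1
    simpa [mul_comm] using this
  exact (hstab.coeff (by omega)).symm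

noncomputable def Podd (n : ℕ) : A := ∏ k ∈ range n, ((1 + (X:A)^(4*k+3)) * (1 + (X:A)^(4*k+1)))
noncomputable def Codd (L : ℕ) : A := ∏ k ∈ range L, (1 - (X:A)^(4*k+2))

lemma Pt1_four (n : ℕ) : Pt (X:A) (4*(n+1)) = Pt (X:A) (4*n) *
    ((1 - (X:A)^(4*n+1)) * (1 - (X:A)^(4*n+2)) * (1 - (X:A)^(4*n+3)) * (1 - (X:A)^(4*n+4))) := by
  have h := Pt_add (X:A) (4*n) 4
  rw [show 4*n+4 = 4*(n+1) from by ring] at h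
  rw [h]
  congr 1
  rw [Finset.prod_range_succ, Finset.prod_range_succ, Finset.prod_range_succ,
    Finset.prod_range_one]

lemma I1 : ∀ n, Podd n * Pt (X:A) (4*n) = Codd (2*n) * Pt ((X:A)^2) (2*n) := by
  intro n
  induction n with
  | zero => simp [Podd, Codd, Pt]
  | succ n ih =>
    rw [Podd, Finset.prod_range_succ, ← Podd, Pt1_four]
    rw [show 2*(n+1) = (2*n+1)+1 from by ring]
    rw [Codd, Finset.prod_range_succ, Finset.prod_range_succ, ← Codd]
    rw [Pt_succ, Pt_succ]
    linear_combination ((1 + (X:A)^(4*n+3)) * (1 + (X:A)^(4*n+1))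
      * ((1 - (X:A)^(4*n+1)) * (1 - (X:A)^(4*n+2)) * (1 - (X:A)^(4*n+3)) * (1 - (X:A)^(4*n+4)))) * ih
lemma I3 : ∀ n, Pt ((X:A)^2) (2*n) = Pt ((X:A)^4) n * Codd n := by
  intro n
  induction n with
  | zero => simp [Pt, Codd]
  | succ n ih =>
    rw [show 2*(n+1) = (2*n+1)+1 from by ring]
    rw [Pt_succ, Pt_succ, Pt_succ]
    rw [Codd, Finset.prod_range_succ, ← Codd]
    rw [ih]
    ring

lemma Codd_split (n : ℕ) :
    Codd (2*n) = Codd n * ∏ k ∈ range n, (1 - (X:A)^(4*(n+k)+2)) := by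
  rw [show 2*n = n + n from by ring, Codd, Finset.prod_range_add, ← Codd]


lemma MD.mul_powX {m : ℕ} {f g : A} (h : MD m f g) (e : ℕ) :
    MD (m + e) (f * (X:A)^e) (g * (X:A)^e) := by
  rw [MD] at h ⊢
  have he : f * (X:A)^e - g * (X:A)^e = (f - g) * (X:A)^e := by ring
  rw [he, pow_add]
  exact mul_dvd_mul h dvd_rfl

lemma MD_X_pow_mul {m n : ℕ} {f g : A} (h : MD m f g) :
    MD (n + m) ((PowerSeries.X : A) ^ n * f) (X ^ n * g) := by
  rw [MD] at h ⊢
  have e : (PowerSeries.X : A) ^ n * f - X ^ n * g = X ^ n * (f - g) := by ring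
  rw [e, pow_add]
  exact mul_dvd_mul_left _ h

lemma MD_of_X_pow_mul {m n : ℕ} {f g : A}
    (h : MD (n + m) ((PowerSeries.X : A) ^ n * f) (X ^ n * g)) : MD m f g := by
  rw [MD] at h ⊢
  have e : (PowerSeries.X : A) ^ n * f - X ^ n * g = X ^ n * (f - g) := by ring
  rw [e, pow_add, mul_dvd_mul_iff_left (pow_ne_zero n (PowerSeries.X_ne_zero : (X:A) ≠ 0))] at h
  exact h

lemma bound5 (n i : ℕ) (hi : i ≤ 2*n) : 5*n+1 ≤ u n i + (4 * min i (2*n - i) + 4) := by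
  have hw := w_val n i
  have hsq1 : (0:ℤ) ≤ (4*((n:ℤ)-i)-5)^2 := sq_nonneg _
  have hex1 : (4*((n:ℤ)-i)-5)^2 = 16*((n:ℤ)-i)^2 - 40*((n:ℤ)-i) + 25 := by ring
  have hsq2 : (0:ℤ) ≤ (4*((n:ℤ)-i)+3)^2 := sq_nonneg _
  have hex2 : (4*((n:ℤ)-i)+3)^2 = 16*((n:ℤ)-i)^2 + 24*((n:ℤ)-i) + 9 := by ring
  unfold u
  omega

lemma SP (n : ℕ) : MD (5*n+1) (Pt ((X:A)^4) n * S n) (Sf n) := by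
  rw [S, Sf, Finset.mul_sum]
  apply MD.sum
  intro i hi
  rw [Finset.mem_range] at hi
  have h1 := gb_congr n i (by omega)
  have e : Pt ((X:A)^4) n * c4 n i = (Pt ((X:A)^4) n * gb ((X:A)^4) (2*n) i) * (X:A)^(u n i) := by
    rw [c4]; ring
  rw [e]
  have h2 := h1.mul_powX (u n i)
  rw [one_mul] at h2
  exact h2.mono (by have := bound5 n i (by omega); omega)

lemma S_eq (n : ℕ) : S n = (X:A)^n * Podd n := by
  rw [← jtp]
  calc (∏ k ∈ range n, ((1 + (X:A)^(4*k+3)) * ((X:A) + X^(4*k+2))))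
      = ∏ k ∈ range n, ((X:A) * ((1 + (X:A)^(4*k+3)) * (1 + (X:A)^(4*k+1)))) :=
        Finset.prod_congr rfl fun k _ => by ring
    _ = (X:A)^n * Podd n := by
        rw [Finset.prod_mul_distrib, Finset.prod_const, Finset.card_range, Podd]

theorem main_ps : theta21core * Ek ℚ 1 = Ek ℚ 2 ^ 2 := by
  ext m
  set n := m + 1 with hn
  have h1 : MD (m+1) (Ek ℚ 1) (Pt ((X:A)^1) (4*n)) := Ek_MD 1 le_rfl (by omega)
  rw [pow_one] at h1
  have h2 : MD (m+1) (Ek ℚ 2) (Pt ((X:A)^2) (2*n)) := Ek_MD 2 (by norm_num) (by omega)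
  have key : MD (m+1) (theta21core * Pt (X:A) (4*n))
      (Pt ((X:A)^2) (2*n) * Pt ((X:A)^2) (2*n)) := by
    apply MD_of_X_pow_mul (n := n)
    have hth : MD (n+m+1) ((X:A)^n * theta21core) (Sf n) := theta_MD (by omega)
    have hA : MD (n+m+1) ((X:A)^n * (theta21core * Pt (X:A) (4*n)))
        (Sf n * Pt (X:A) (4*n)) := by
      have h := hth.mul (MD.refl (n+m+1) (Pt (X:A) (4*n)))
      have e : (X:A)^n * theta21core * Pt (X:A) (4*n)
          = (X:A)^n * (theta21core * Pt (X:A) (4*n)) := by ring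
      rwa [e] at h
    have hB : MD (n+m+1) (Sf n) (Pt ((X:A)^4) n * S n) := (SP n).symm.mono (by omega)
    have hB' : MD (n+m+1) (Sf n * Pt (X:A) (4*n))
        ((Pt ((X:A)^4) n * S n) * Pt (X:A) (4*n)) := hB.mul (MD.refl _ _)
    have hC : (Pt ((X:A)^4) n * S n) * Pt (X:A) (4*n)
        = (X:A)^n * (Pt ((X:A)^4) n * Codd (2*n) * Pt ((X:A)^2) (2*n)) := by
      rw [S_eq]
      linear_combination ((X:A)^n * Pt ((X:A)^4) n) * I1 n
    rw [hC] at hB'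
    have hW : MD (n+m+1) (Pt ((X:A)^4) n * Codd (2*n) * Pt ((X:A)^2) (2*n))
        (Pt ((X:A)^2) (2*n) * Pt ((X:A)^2) (2*n)) := by
      rw [Codd_split]
      have hw1 : MD (n+m+1) (∏ k ∈ range n, (1 - (X:A)^(4*(n+k)+2))) 1 :=
        MD.prod_one fun k _ => MD_one_sub_pow (by omega)
      have h := (MD.refl (n+m+1) (Pt ((X:A)^4) n * Codd n * Pt ((X:A)^2) (2*n))).mul hw1
      have e1 : Pt ((X:A)^4) n * (Codd n * ∏ k ∈ range n, (1 - (X:A)^(4*(n+k)+2)))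
            * Pt ((X:A)^2) (2*n)
          = (Pt ((X:A)^4) n * Codd n * Pt ((X:A)^2) (2*n))
              * ∏ k ∈ range n, (1 - (X:A)^(4*(n+k)+2)) := by ring
      have e2 : (Pt ((X:A)^4) n * Codd n * Pt ((X:A)^2) (2*n)) * 1
          = Pt ((X:A)^2) (2*n) * Pt ((X:A)^2) (2*n) := by
        rw [mul_one, ← I3 n]
      rw [e1]
      rw [e2] at h
      exact h
    have final := (hA.trans hB').trans ((MD.refl (n+m+1) ((X:A)^n)).mul hW)
    rwa [show n + (m+1) = n+m+1 from by omega]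
  have hL : MD (m+1) (theta21core * Ek ℚ 1) (theta21core * Pt (X:A) (4*n)) :=
    (MD.refl _ _).mul h1
  have hR : MD (m+1) (Ek ℚ 2 ^ 2) (Pt ((X:A)^2) (2*n) * Pt ((X:A)^2) (2*n)) := by
    rw [pow_two]
    exact h2.mul h2
  exact ((hL.trans key).trans hR.symm).coeff (Nat.lt_succ_self m)

end Theta21

/-- ∑_{n ∈ ℤ} q^{2n²+n} = (q²;q²)_∞² / (q;q)_∞. -/
theorem theta21_eq_eta_quotient :
    toL theta21core = EL 2 ^ 2 / EL 1 := by
  have hcoe : ∀ f : PowerSeries ℚ, (f : LaurentSeries ℚ) = HahnSeries.ofPowerSeries ℤ ℚ f :=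
    fun f => rfl
  have hconst : PowerSeries.coeff 0 (Ek ℚ 1) = 1 := by
    rw [Ek, qPoch, PowerSeries.coeff_mk]
    simp [Finset.prod_range_one]
  have hEk1 : Ek ℚ 1 ≠ 0 := by
    intro h
    rw [h, map_zero] at hconst
    exact zero_ne_one hconst
  have hne : EL 1 ≠ 0 := by
    rw [EL]
    intro h
    apply hEk1
    apply HahnSeries.ofPowerSeries_injective (Γ := ℤ) (R := ℚ)
    rw [← hcoe, h, map_zero]
  rw [eq_div_iff hne, toL, EL, EL, hcoe, hcoe, hcoe, ← map_mul, Theta21.main_ps, map_pow]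
end

section
/- The product identity ψ(q) = ∑_{n≥0} q^{n(n+1)/2}, i.e., (−q;q^2)_∞ (q^4;q^4)_∞ = ∑_{n≥0} q^{n(n+1)/2}, holds in ℤ[[q]]. -/
open PowerSeries Finset

namespace PsiAux

noncomputable abbrev Q : PowerSeries ℤ := PowerSeries.X

/-- Gaussian binomial coefficients as power series over ℤ, via the q-Pascal rule. -/
noncomputable def G : ℕ → ℕ → PowerSeries ℤ
  | 0, 0 => 1
  | 0, _+1 => 0
  | n+1, 0 => G n 0
  | n+1, k+1 => G n (k+1) + Q^(n-k) * G n k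

lemma G_succ_succ (n k : ℕ) : G (n+1) (k+1) = G n (k+1) + Q^(n-k) * G n k := rfl

lemma G_succ_zero (n : ℕ) : G (n+1) 0 = G n 0 := rfl

lemma G_zero (n : ℕ) : G n 0 = 1 := by
  induction n with
  | zero => rfl
  | succ n ih => rw [G_succ_zero, ih]

lemma G_eq_zero : ∀ n k : ℕ, n < k → G n k = 0
  | 0, k+1, _ => rfl
  | n+1, k+1, h => by
    rw [G_succ_succ, G_eq_zero n (k+1) (by omega), G_eq_zero n k (by omega)]
    ring

lemma G_diag (n : ℕ) : G n n = 1 := by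
  induction n with
  | zero => rfl
  | succ n ih => rw [G_succ_succ, ih, G_eq_zero n (n+1) (by omega), Nat.sub_self]; ring

lemma pascal2 : ∀ n k : ℕ, G (n+1) (k+1) = Q^(k+1) * G n (k+1) + G n k := by
  intro n
  induction n with
  | zero =>
    intro k
    match k with
    | 0 =>
      rw [G_succ_succ, G_zero, G_eq_zero 0 (0+1) (by omega)]; ring
    | k+1 =>
      rw [G_succ_succ, G_eq_zero 0 (k+1+1) (by omega), G_eq_zero 0 (k+1) (by omega)]
      ring
  | succ n ih =>
    intro k
    match k with
    | 0 =>
      rw [G_succ_succ (n+1) 0, G_succ_succ n 0, G_succ_zero, G_zero]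
      have h := ih 0
      rw [G_succ_succ n 0, G_zero] at h
      simp only [Nat.sub_zero, pow_one] at h ⊢
      linear_combination h
    | k+1 =>
      by_cases hk : k + 1 ≤ n
      · obtain ⟨a, rfl⟩ : ∃ a, n = k+1+a := ⟨n-(k+1), by omega⟩
        rw [G_succ_succ (k+1+a+1) (k+1), G_succ_succ (k+1+a) (k+1),
          G_succ_succ (k+1+a) k]
        rw [show k+1+a+1-(k+1) = a+1 from by omega,
          show k+1+a-(k+1) = a from by omega,
          show k+1+a-k = a+1 from by omega]
        have h1 := ih (k+1)
        have h2 := ih k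
        rw [G_succ_succ (k+1+a) (k+1), show k+1+a-(k+1) = a from by omega] at h1
        rw [G_succ_succ (k+1+a) k, show k+1+a-k = a+1 from by omega] at h2
        linear_combination h1 + Q^(a+1) * h2
      · rw [G_succ_succ (n+1) (k+1), ih (k+1), ih k,
          G_eq_zero n (k+1+1) (by omega), G_eq_zero n (k+1) (by omega)]
        by_cases hk2 : k = n
        · subst hk2; rw [G_diag, Nat.sub_self, pow_zero]; ring
        · rw [G_eq_zero n k (by omega)]; ring


/-- `Qf n = (q;q)_n = ∏_{k=1}^n (1-q^k)`. -/
noncomputable def Qf (n : ℕ) : PowerSeries ℤ := ∏ k ∈ Finset.range n, (1 - Q^(k+1))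

lemma Qf_succ (n : ℕ) : Qf (n+1) = Qf n * (1 - Q^(n+1)) := Finset.prod_range_succ _ n

lemma Qf_zero : Qf 0 = 1 := rfl

lemma G_mul_Qf : ∀ n k : ℕ, k ≤ n → G n k * (Qf k * Qf (n-k)) = Qf n := by
  intro n
  induction n with
  | zero => intro k hk; interval_cases k; simp [G, Qf]
  | succ n ih =>
    intro k hk
    match k with
    | 0 =>
      rw [G_zero]
      simp only [Nat.sub_zero, Qf, Finset.range_zero, Finset.prod_empty]
      ring
    | k+1 =>
      by_cases hkn : k + 1 ≤ n
      · obtain ⟨a, rfl⟩ : ∃ a, n = k+1+a := ⟨n-(k+1), by omega⟩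
        rw [G_succ_succ, show k+1+a-k = a+1 from by omega,
          show k+1+a+1-(k+1) = a+1 from by omega]
        have h1 := ih (k+1) (by omega)
        have h2 := ih k (by omega)
        rw [show k+1+a-(k+1) = a from by omega, Qf_succ k] at h1
        rw [show k+1+a-k = a+1 from by omega, Qf_succ a] at h2
        rw [Qf_succ (k+1+a), Qf_succ a, Qf_succ k]
        linear_combination (1 - Q^(a+1)) * h1 + Q^(a+1) * (1 - Q^(k+1)) * h2
      · have hkn2 : k = n := by omega
        subst hkn2
        rw [G_diag, Nat.sub_self, Qf_zero]
        ring

/-- coefficient stabilization in the first argument -/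
lemma coeff_G_succ (n k c : ℕ) (h : k + c < n + 1) :
    PowerSeries.coeff c (G (n+1) k) = PowerSeries.coeff c (G n k) := by
  match k with
  | 0 => rw [G_succ_zero]
  | k+1 =>
    rw [G_succ_succ, map_add]
    have hz : PowerSeries.coeff c (Q^(n-k) * G n k) = 0 := by
      refine PowerSeries.X_pow_dvd_iff.mp (Dvd.intro _ rfl) c (by omega)
    rw [hz, add_zero]

/-- coefficient stabilization along the diagonal -/
lemma coeff_G_diagstep (n k c : ℕ) (h : c < k + 1) :
    PowerSeries.coeff c (G (n+1) (k+1)) = PowerSeries.coeff c (G n k) := by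
  rw [pascal2, map_add]
  have hz : PowerSeries.coeff c (Q^(k+1) * G n (k+1)) = 0 := by
    refine PowerSeries.X_pow_dvd_iff.mp (Dvd.intro _ rfl) c (by omega)
  rw [hz, zero_add]

/-- the limiting coefficients (of `1/(q;q)_∞`) -/
noncomputable def pc (c : ℕ) : ℤ := PowerSeries.coeff c (G (2*c+2) (c+1))

lemma coeff_G_stable : ∀ n k c : ℕ, c < k → c < n - k →
    PowerSeries.coeff c (G n k) = pc c := by
  intro n
  induction n with
  | zero => intro k c h1 h2; omega
  | succ n ih =>
    intro k c h1 h2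
    by_cases hd : c + 1 < k
    · -- use diagonal step backwards
      match k, h1 with
      | k+1, h1 =>
        rw [coeff_G_diagstep n k c (by omega)]
        exact ih k c (by omega) (by omega)
    · -- k = c+1
      have hk : k = c + 1 := by omega
      subst hk
      by_cases hn : n + 1 = 2*c + 2
      · rw [hn]; rfl
      · rw [coeff_G_succ n (c+1) c (by omega)]
        exact ih (c+1) c (by omega) (by omega)


/-- triangular numbers -/
def tri : ℕ → ℕ
  | 0 => 0
  | n+1 => tri n + n + 1

lemma tri_succ (n : ℕ) : tri (n+1) = tri n + n + 1 := rfl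

/-- exponent `T_{k-N}` for `k-N ∈ ℤ` -/
def Ee (k N : ℕ) : ℕ := if N ≤ k then tri (k - N) else tri (N - k - 1)

lemma Ee_shift (k N : ℕ) : Ee (k+1) (N+1) = Ee k N := by
  unfold Ee
  by_cases h : N ≤ k
  · rw [if_pos (show N+1 ≤ k+1 from by omega), if_pos h,
      show k+1-(N+1) = k-N from by omega]
  · rw [if_neg (show ¬(N+1 ≤ k+1) from by omega), if_neg h,
      show N+1-(k+1)-1 = N-k-1 from by omega]

lemma Ee_E1 (m N : ℕ) : Ee m (N+1) + m = Ee m N + N := by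
  unfold Ee
  rcases lt_trichotomy m N with h | h | h
  · rw [if_neg (show ¬(N+1 ≤ m) from by omega), if_neg (show ¬(N ≤ m) from by omega)]
    obtain ⟨a, rfl⟩ : ∃ a, N = m + a + 1 := ⟨N - m - 1, by omega⟩
    rw [show m+a+1+1-m-1 = a+1 from by omega, show m+a+1-m-1 = a from by omega,
      tri_succ]
    omega
  · rw [if_neg (show ¬(N+1 ≤ m) from by omega), if_pos (show N ≤ m from by omega),
      show N+1-m-1 = 0 from by omega, show m-N = 0 from by omega]
    omega
  · rw [if_pos (show N+1 ≤ m from by omega), if_pos (show N ≤ m from by omega)]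
    obtain ⟨a, rfl⟩ : ∃ a, m = N + a + 1 := ⟨m - N - 1, by omega⟩
    rw [show N+a+1-(N+1) = a from by omega, show N+a+1-N = a+1 from by omega,
      tri_succ]
    omega

lemma Ee_E3 (k N : ℕ) (hk : k ≤ 2*N) : Ee (k+2) (N+1) + (2*N-k) = Ee k N + (N+1) := by
  unfold Ee
  by_cases hA : N ≤ k
  · rw [if_pos (show N+1 ≤ k+2 from by omega), if_pos hA]
    rcases eq_or_lt_of_le hA with h2 | h2
    · rw [show k+2-(N+1) = 1 from by omega, show k-N = 0 from by omega,
        show tri 1 = 1 from rfl, show tri 0 = 0 from rfl]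
      omega
    · obtain ⟨a, rfl⟩ : ∃ a, k = N + a + 1 := ⟨k - N - 1, by omega⟩
      rw [show N+a+1+2-(N+1) = a+2 from by omega, show N+a+1-N = a+1 from by omega,
        tri_succ (a+1), tri_succ a]
      omega
  · by_cases hB : k + 1 = N
    · rw [if_pos (show N+1 ≤ k+2 from by omega), if_neg hA,
        show k+2-(N+1) = 0 from by omega, show N-k-1 = 0 from by omega]
      omega
    · rw [if_neg (show ¬(N+1 ≤ k+2) from by omega), if_neg hA]
      obtain ⟨a, rfl⟩ : ∃ a, N = k + a + 2 := ⟨N - k - 2, by omega⟩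
      rw [show k+a+2+1-(k+2)-1 = a from by omega, show k+a+2-k-1 = a+1 from by omega,
        tri_succ]
      omega

lemma add_one_one (x : ℕ) : x+1+1 = x+2 := rfl

lemma G_two_step (n k : ℕ) :
    G (n+2) (k+2) = Q^(k+2) * G n (k+2) + (1+Q^(n+1)) * G n (k+1) + Q^(n-k) * G n k := by
  have h := pascal2 (n+1) (k+1)
  rw [G_succ_succ n (k+1), G_succ_succ n k] at h
  simp only [add_one_one] at h
  by_cases hk : k + 1 ≤ n
  · obtain ⟨a, rfl⟩ : ∃ a, n = k + a + 1 := ⟨n - k - 1, by omega⟩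
    rw [show k+a+1-(k+1) = a from by omega] at h
    rw [show k+a+1-k = a+1 from by omega] at h ⊢
    rw [show k+a+1+2 = k+a+1+1+1 from rfl] at *
    rw [h]; ring
  · rw [G_eq_zero n (k+2) (by omega), G_eq_zero n (k+1) (by omega)] at h ⊢
    rw [show n+2 = n+1+1 from rfl, h]; ring

lemma G_one_step (n : ℕ) :
    G (n+2) 1 = Q * G n 1 + (1+Q^(n+1)) * G n 0 := by
  have h := pascal2 (n+1) 0
  rw [G_succ_succ n 0, G_succ_zero] at h
  rw [show n+2 = n+1+1 from rfl, h, Nat.sub_zero]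
  ring


/-- partial theta-side sum -/
noncomputable def S (N : ℕ) : PowerSeries ℤ :=
  ∑ k ∈ Finset.range (2*N+1), Q^(Ee k N) * G (2*N) k

lemma S_def (N : ℕ) : S N = ∑ k ∈ Finset.range (2*N+1), Q^(Ee k N) * G (2*N) k := rfl

/-- product side: `∏ (1+q^{k+1}) · ∏ (1+q^k)` -/
noncomputable def L (N : ℕ) : PowerSeries ℤ :=
  (∏ k ∈ Finset.range N, (1 + Q^(k+1))) * ∏ k ∈ Finset.range N, (1 + Q^k)

lemma L_def (N : ℕ) : L N =
    (∏ k ∈ Finset.range N, (1 + Q^(k+1))) * ∏ k ∈ Finset.range N, (1 + Q^k) := rfl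

lemma L_succ (N : ℕ) : L (N+1) = L N * ((1+Q^(N+1)) * (1+Q^N)) := by
  rw [L_def, L_def, Finset.prod_range_succ, Finset.prod_range_succ]
  ring

lemma S_shift1 (N : ℕ) :
    ∑ k ∈ Finset.range (2*N+1), Q^(Ee (k+1) N) * G (2*N) (k+1)
      = S N - Q^(Ee 0 N) * G (2*N) 0 := by
  have a1 := Finset.sum_range_succ' (fun m => Q^(Ee m N) * G (2*N) m) (2*N+1)
  have a2 := Finset.sum_range_succ (fun m => Q^(Ee m N) * G (2*N) m) (2*N+1)
  beta_reduce at a1 a2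
  have z1 : Q^(Ee (2*N+1) N) * G (2*N) (2*N+1) = 0 := by
    rw [G_eq_zero (2*N) (2*N+1) (by omega), mul_zero]
  rw [S_def]
  linear_combination a2 - a1 + z1

lemma S_shift2 (N : ℕ) :
    ∑ k ∈ Finset.range (2*N+1), Q^(Ee (k+2) N) * G (2*N) (k+2)
      = S N - Q^(Ee 0 N) * G (2*N) 0 - Q^(Ee 1 N) * G (2*N) 1 := by
  have a1 := Finset.sum_range_succ' (fun m => Q^(Ee (m+1) N) * G (2*N) (m+1)) (2*N+1)
  have a2 := Finset.sum_range_succ (fun m => Q^(Ee (m+1) N) * G (2*N) (m+1)) (2*N+1)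
  simp only [add_one_one, Nat.zero_add] at a1 a2
  have z2 : Q^(Ee (2*N+2) N) * G (2*N) (2*N+2) = 0 := by
    rw [G_eq_zero (2*N) (2*N+2) (by omega), mul_zero]
  have h2 := S_shift1 N
  linear_combination a2 - a1 + z2 + h2

lemma S_succ (N : ℕ) : S (N+1) = (1+Q^(N+1)) * (1+Q^N) * S N := by
  have e0 : S (N+1) = (∑ k ∈ Finset.range (2*N+1), Q^(Ee (k+2) (N+1)) * G (2*N+2) (k+2))
      + Q^(Ee 1 (N+1)) * G (2*N+2) 1 + Q^(Ee 0 (N+1)) * G (2*N+2) 0 := by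
    rw [S_def]
    rw [show 2*(N+1)+1 = (2*N+1)+1+1 from by ring, show 2*(N+1) = 2*N+2 from by ring]
    rw [Finset.sum_range_succ']
    rw [Finset.sum_range_succ']
  have e1 : ∑ k ∈ Finset.range (2*N+1), Q^(Ee (k+2) (N+1)) * G (2*N+2) (k+2)
      = ∑ k ∈ Finset.range (2*N+1),
          (Q^N * (Q^(Ee (k+2) N) * G (2*N) (k+2))
            + (1+Q^(2*N+1)) * (Q^(Ee (k+1) N) * G (2*N) (k+1))
            + Q^(N+1) * (Q^(Ee k N) * G (2*N) k)) := by
    refine Finset.sum_congr rfl fun k hk => ?_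
    have hk' : k ≤ 2*N := by have := Finset.mem_range.mp hk; omega
    rw [G_two_step (2*N) k]
    have p1 : (Q:PowerSeries ℤ)^(Ee (k+2) (N+1)) * Q^(k+2) = Q^N * Q^(Ee (k+2) N) := by
      rw [← pow_add, ← pow_add]; congr 1
      have := Ee_E1 (k+2) N; omega
    have p2 : (Q:PowerSeries ℤ)^(Ee (k+2) (N+1)) = Q^(Ee (k+1) N) := by
      have := Ee_shift (k+1) N
      rw [add_one_one] at this
      rw [this]
    have p3 : (Q:PowerSeries ℤ)^(Ee (k+2) (N+1)) * Q^(2*N-k) = Q^(N+1) * Q^(Ee k N) := by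
      rw [← pow_add, ← pow_add]; congr 1
      have := Ee_E3 k N hk'; omega
    linear_combination (G (2*N) (k+2)) * p1 + ((1+Q^(2*N+1)) * G (2*N) (k+1)) * p2
      + (G (2*N) k) * p3
  have e2 : ∑ k ∈ Finset.range (2*N+1),
          (Q^N * (Q^(Ee (k+2) N) * G (2*N) (k+2))
            + (1+Q^(2*N+1)) * (Q^(Ee (k+1) N) * G (2*N) (k+1))
            + Q^(N+1) * (Q^(Ee k N) * G (2*N) k))
      = Q^N * (S N - Q^(Ee 0 N) * G (2*N) 0 - Q^(Ee 1 N) * G (2*N) 1)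
        + (1+Q^(2*N+1)) * (S N - Q^(Ee 0 N) * G (2*N) 0)
        + Q^(N+1) * S N := by
    rw [Finset.sum_add_distrib, Finset.sum_add_distrib,
      ← Finset.mul_sum, ← Finset.mul_sum, ← Finset.mul_sum,
      S_shift2, S_shift1, ← S_def]
  have hb1 : G (2*N+2) 1 = Q * G (2*N) 1 + (1+Q^(2*N+1)) := by
    have := G_one_step (2*N)
    rw [G_zero, mul_one] at this
    exact this
  have hb0 : G (2*N+2) 0 = 1 := G_zero _
  have hg0 : G (2*N) 0 = 1 := G_zero _
  have pb1 : (Q:PowerSeries ℤ)^(Ee 0 (N+1)) = Q^(Ee 0 N) * Q^N := by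
    rw [← pow_add]; congr 1
    have := Ee_E1 0 N; omega
  have pb2 : (Q:PowerSeries ℤ)^(Ee 1 (N+1)) * Q = Q^(Ee 1 N) * Q^N := by
    rw [← pow_succ, ← pow_add]; congr 1
    have := Ee_E1 1 N; omega
  have pb3 : (Q:PowerSeries ℤ)^(Ee 1 (N+1)) = Q^(Ee 0 N) := by
    have := Ee_shift 0 N
    rw [Nat.zero_add] at this
    rw [this]
  rw [e0, e1, e2, hb1, hb0, hg0]
  linear_combination (1+Q^(2*N+1)) * pb3 + pb1 + (G (2*N) 1) * pb2

lemma main_fin : ∀ N, L N = S N := by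
  intro N
  induction N with
  | zero =>
    rw [L_def, S_def]
    simp [Ee, tri, G_zero]
  | succ n ih =>
    rw [L_succ, ih, S_succ]
    ring


/-! ### Truncation lemmas for `qPoch` -/

lemma qPoch_coeff (a q : PowerSeries ℤ) (ha : PowerSeries.constantCoeff a = 0)
    (hq : PowerSeries.constantCoeff q = 0) (n N : ℕ) (hN : n + 1 ≤ N) :
    PowerSeries.coeff n (qPoch a q)
      = PowerSeries.coeff n (∏ k ∈ Finset.range N, (1 - a * q ^ k)) := by
  induction N, hN using Nat.le_induction with
  | base => rw [qPoch, PowerSeries.coeff_mk]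
  | succ N hN ih =>
    rw [Finset.prod_range_succ, mul_sub, mul_one, map_sub, ← ih]
    have hz : PowerSeries.coeff n ((∏ k ∈ Finset.range N, (1 - a * q ^ k)) * (a * q ^ N)) = 0 := by
      have hdvd : (PowerSeries.X : PowerSeries ℤ)^(N+1) ∣
          (∏ k ∈ Finset.range N, (1 - a * q ^ k)) * (a * q ^ N) := by
        have h1 : (PowerSeries.X : PowerSeries ℤ) ∣ a := PowerSeries.X_dvd_iff.mpr ha
        have h2 : (PowerSeries.X : PowerSeries ℤ)^N ∣ q^N :=
          pow_dvd_pow_of_dvd (PowerSeries.X_dvd_iff.mpr hq) N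
        have : (PowerSeries.X : PowerSeries ℤ)^(N+1) ∣ a * q ^ N := by
          rw [pow_succ, mul_comm ((PowerSeries.X:PowerSeries ℤ)^N) _]
          exact mul_dvd_mul h1 h2
        exact this.mul_left _
      exact PowerSeries.X_pow_dvd_iff.mp hdvd n (by omega)
    rw [hz, sub_zero]

lemma coeff_mul_congr {f f' g g' : PowerSeries ℤ} (n : ℕ)
    (hf : ∀ j ≤ n, PowerSeries.coeff j f = PowerSeries.coeff j f')
    (hg : ∀ j ≤ n, PowerSeries.coeff j g = PowerSeries.coeff j g') :
    PowerSeries.coeff n (f * g) = PowerSeries.coeff n (f' * g') := by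
  rw [PowerSeries.coeff_mul, PowerSeries.coeff_mul]
  refine Finset.sum_congr rfl fun p hp => ?_
  have hp' := Finset.HasAntidiagonal.mem_antidiagonal.mp hp
  rw [hf p.1 (by omega), hg p.2 (by omega)]

/-! ### The specific series -/

/-- `M = (−q; q)_∞` -/
noncomputable def M : PowerSeries ℤ := qPoch (-(PowerSeries.X : PowerSeries ℤ)) PowerSeries.X

lemma Qf_def (n : ℕ) : Qf n = ∏ k ∈ Finset.range n, (1 - Q^(k+1)) := rfl

lemma coeff_M (n N : ℕ) (hN : n + 1 ≤ N) :
    PowerSeries.coeff n M = PowerSeries.coeff n (∏ k ∈ Finset.range N, (1 + Q^(k+1))) := by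
  rw [M, qPoch_coeff _ _ (by simp) (by simp) n N hN]
  have e : (∏ k ∈ Finset.range N, (1 - -(PowerSeries.X:PowerSeries ℤ) * PowerSeries.X ^ k))
      = ∏ k ∈ Finset.range N, (1 + Q^(k+1)) :=
    Finset.prod_congr rfl fun k _ => by ring
  rw [e]

lemma coeff_E1 (n N : ℕ) (hN : n + 1 ≤ N) :
    PowerSeries.coeff n (Ek ℤ 1) = PowerSeries.coeff n (Qf N) := by
  rw [Ek, qPoch_coeff _ _ (by simp) (by simp) n N hN, Qf_def]
  have e : (∏ k ∈ Finset.range N, (1 - (PowerSeries.X:PowerSeries ℤ)^1 * ((PowerSeries.X:PowerSeries ℤ)^1) ^ k))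
      = ∏ k ∈ Finset.range N, (1 - Q^(k+1)) :=
    Finset.prod_congr rfl fun k _ => by ring
  rw [e]

lemma coeff_A (n N : ℕ) (hN : n + 1 ≤ N) :
    PowerSeries.coeff n (qPoch (-(PowerSeries.X : PowerSeries ℤ)) (PowerSeries.X ^ 2))
      = PowerSeries.coeff n (∏ k ∈ Finset.range N, (1 + Q^(2*k+1))) := by
  rw [qPoch_coeff _ _ (by simp) (by simp) n N hN]
  have e : (∏ k ∈ Finset.range N, (1 - -(PowerSeries.X:PowerSeries ℤ) * ((PowerSeries.X:PowerSeries ℤ)^2) ^ k))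
      = ∏ k ∈ Finset.range N, (1 + Q^(2*k+1)) :=
    Finset.prod_congr rfl fun k _ => by ring
  rw [e]

lemma coeff_E4 (n N : ℕ) (hN : n + 1 ≤ N) :
    PowerSeries.coeff n (Ek ℤ 4)
      = PowerSeries.coeff n (∏ k ∈ Finset.range N, (1 - Q^(4*k+4))) := by
  rw [Ek, qPoch_coeff _ _ (by simp) (by simp) n N hN]
  have e : (∏ k ∈ Finset.range N, (1 - (PowerSeries.X:PowerSeries ℤ)^4 * ((PowerSeries.X:PowerSeries ℤ)^4) ^ k))
      = ∏ k ∈ Finset.range N, (1 - Q^(4*k+4)) :=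
    Finset.prod_congr rfl fun k _ => by ring
  rw [e]


/-- the partition generating series `1/(q;q)_∞`, defined via stabilized Gaussian
binomial coefficients -/
noncomputable def P : PowerSeries ℤ := PowerSeries.mk pc

lemma coeff_P (j : ℕ) : PowerSeries.coeff j P = pc j := PowerSeries.coeff_mk _ _

lemma prod_one_sub_tail (c M : ℕ) (e : ℕ → ℕ) (he : ∀ k, c ≤ e k) :
    ∃ u : PowerSeries ℤ, ∏ k ∈ Finset.range M, (1 - Q^(e k)) = 1 + Q^c * u := by
  induction M with
  | zero => exact ⟨0, by simp⟩
  | succ M ih =>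
    obtain ⟨u, hu⟩ := ih
    refine ⟨u * (1 - Q^(e M)) - Q^(e M - c), ?_⟩
    rw [Finset.prod_range_succ, hu]
    have hp : (Q:PowerSeries ℤ)^(e M) = Q^c * Q^(e M - c) := by
      rw [← pow_add]; congr 1; have := he M; omega
    linear_combination -hp

lemma constCoeff_Qf (N : ℕ) : PowerSeries.constantCoeff (Qf N) = 1 := by
  rw [Qf_def, map_prod]
  refine Finset.prod_eq_one fun k _ => ?_
  rw [map_sub, map_one, map_pow, PowerSeries.constantCoeff_X, zero_pow (Nat.succ_ne_zero k), sub_zero]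

lemma Qf_ne_zero (N : ℕ) : Qf N ≠ 0 := by
  intro h
  have := constCoeff_Qf N
  rw [h, map_zero] at this
  exact zero_ne_one this

lemma E1_mul_P : Ek ℤ 1 * P = 1 := by
  apply PowerSeries.ext
  intro d
  set N := d + 1 with hNd
  have h1 : PowerSeries.coeff d (Ek ℤ 1 * P)
      = PowerSeries.coeff d (Qf N * G (2*N) N) := by
    refine coeff_mul_congr d (fun j hj => coeff_E1 j N (by omega)) (fun j hj => ?_)
    rw [coeff_P]
    exact (coeff_G_stable (2*N) N j (by omega) (by omega)).symm
  have h2 : Qf N * G (2*N) N = ∏ k ∈ Finset.range N, (1 - Q^(N+1+k)) := by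
    have hG := G_mul_Qf (2*N) N (by omega)
    rw [show 2*N-N = N from by omega] at hG
    have hsplit : Qf (2*N) = Qf N * ∏ k ∈ Finset.range N, (1 - Q^(N+1+k)) := by
      rw [Qf_def, Qf_def, show 2*N = N+N from by omega, Finset.prod_range_add]
      congr 1
      exact Finset.prod_congr rfl fun k _ => by rw [show N+k+1 = N+1+k from by omega]
    apply mul_right_cancel₀ (Qf_ne_zero N)
    linear_combination hG + hsplit
  rw [h1, h2]
  obtain ⟨u, hu⟩ := prod_one_sub_tail (d+1) N (fun k => N+1+k) (fun k => by show d + 1 ≤ N + 1 + k; omega)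
  rw [hu, map_add]
  have hz : PowerSeries.coeff d (Q^(d+1) * u) = 0 :=
    PowerSeries.X_pow_dvd_iff.mp ⟨u, rfl⟩ d (by omega)
  rw [hz, add_zero]


lemma tri_ge (n : ℕ) : n ≤ tri n := by
  induction n with
  | zero => simp [tri]
  | succ n ih => rw [tri_succ]; omega

lemma two_tri (n : ℕ) : 2 * tri n = n * (n+1) := by
  induction n with
  | zero => rfl
  | succ n ih =>
    rw [tri_succ]
    calc 2 * (tri n + n + 1) = 2 * tri n + 2*n + 2 := by ring
    _ = n * (n+1) + 2*n+2 := by rw [ih]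
    _ = (n+1) * (n+1+1) := by ring

lemma tri_formula (n : ℕ) : n * (n + 1) / 2 = tri n := by
  have := two_tri n
  omega

/-- the theta series `∑ q^{T_n}` -/
noncomputable def Th : PowerSeries ℤ :=
  PowerSeries.mk fun m => ({n : ℕ | n * (n + 1) / 2 = m}.ncard : ℤ)

lemma coeff_Th (i d : ℕ) (hid : i ≤ d) :
    PowerSeries.coeff i Th = ∑ n ∈ Finset.range (d+1), (if tri n = i then (1:ℤ) else 0) := by
  rw [Th, PowerSeries.coeff_mk]
  have hset : {n : ℕ | n * (n + 1) / 2 = i}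
      = ↑((Finset.range (d+1)).filter fun n => tri n = i) := by
    ext n
    simp only [Set.mem_setOf_eq, Finset.coe_filter, Finset.mem_range, Set.mem_setOf_eq]
    rw [tri_formula]
    constructor
    · intro h
      exact ⟨by have := tri_ge n; omega, h⟩
    · exact fun h => h.2
  rw [hset, Set.ncard_coe_finset, Finset.card_filter]
  push_cast
  rfl

lemma coeff_ThP (d : ℕ) :
    PowerSeries.coeff d (Th * P)
      = ∑ n ∈ Finset.range (d+1), (if tri n ≤ d then pc (d - tri n) else 0) := by
  rw [PowerSeries.coeff_mul, Finset.Nat.sum_antidiagonal_eq_sum_range_succ_mk]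
  have e1 : ∀ i ∈ Finset.range (d+1),
      PowerSeries.coeff i Th * PowerSeries.coeff (d-i) P
        = ∑ n ∈ Finset.range (d+1), (if tri n = i then (1:ℤ) else 0) * pc (d-i) := by
    intro i hi
    rw [coeff_Th i d (by exact Nat.lt_succ_iff.mp (Finset.mem_range.mp hi)), coeff_P,
      Finset.sum_mul]
  rw [Finset.sum_congr rfl e1, Finset.sum_comm]
  refine Finset.sum_congr rfl fun n _ => ?_
  have e2 : ∀ i ∈ Finset.range (d+1),
      (if tri n = i then (1:ℤ) else 0) * pc (d-i) = (if i = tri n then pc (d-i) else 0) := by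
    intro i hi
    by_cases h : tri n = i
    · rw [if_pos h, if_pos h.symm, one_mul]
    · rw [if_neg h, if_neg (fun hh => h hh.symm), zero_mul]
  rw [Finset.sum_congr rfl e2, Finset.sum_ite_eq']
  simp only [Finset.mem_range, Nat.lt_succ_iff]

lemma sum_tri_trunc (d M : ℕ) (hM : d + 1 ≤ M) :
    ∑ n ∈ Finset.range M, (if tri n ≤ d then pc (d - tri n) else 0)
      = ∑ n ∈ Finset.range (d+1), (if tri n ≤ d then pc (d - tri n) else 0) := by
  refine (Finset.sum_subset (Finset.range_subset_range.mpr hM) fun x _ hx => ?_).symm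
  have hx' : d + 1 ≤ x := by
    by_contra h
    exact hx (Finset.mem_range.mpr (by omega))
  rw [if_neg (by have := tri_ge x; omega)]

lemma coeff_X_pow_mul_le (p : PowerSeries ℤ) (e m : ℕ) (h : e ≤ m) :
    PowerSeries.coeff m (PowerSeries.X^e * p) = PowerSeries.coeff (m - e) p := by
  conv_lhs => rw [show m = (m - e) + e from by omega]
  exact PowerSeries.coeff_X_pow_mul p e (m-e)

lemma coeff_S_eval (d : ℕ) :
    PowerSeries.coeff d (S (d+2))
      = 2 * ∑ n ∈ Finset.range (d+1), (if tri n ≤ d then pc (d - tri n) else 0) := by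
  rw [S_def, map_sum]
  have hterm : ∀ k ∈ Finset.range (2*(d+2)+1),
      PowerSeries.coeff d (Q^(Ee k (d+2)) * G (2*(d+2)) k)
        = (if Ee k (d+2) ≤ d then pc (d - Ee k (d+2)) else 0) := by
    intro k hk
    have hk' : k ≤ 2*(d+2) := by have := Finset.mem_range.mp hk; omega
    by_cases hE : Ee k (d+2) ≤ d
    · rw [if_pos hE]
      rw [coeff_X_pow_mul_le _ _ _ hE]
      -- stability conditions
      have hc : d - Ee k (d+2) < k ∧ d - Ee k (d+2) < 2*(d+2) - k := by
        revert hE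
        unfold Ee
        split_ifs with h
        · intro hE
          have h1 := tri_ge (k - (d+2))
          omega
        · intro hE
          have h1 := tri_ge ((d+2) - k - 1)
          omega
      exact coeff_G_stable (2*(d+2)) k (d - Ee k (d+2)) hc.1 hc.2
    · rw [if_neg hE]
      exact PowerSeries.X_pow_dvd_iff.mp ⟨G (2*(d+2)) k, rfl⟩ d (by omega)
  rw [Finset.sum_congr rfl hterm]
  rw [show 2*(d+2)+1 = (d+2) + ((d+2)+1) from by omega, Finset.sum_range_add]
  have hsecond : ∀ k ∈ Finset.range ((d+2)+1),
      (if Ee ((d+2)+k) (d+2) ≤ d then pc (d - Ee ((d+2)+k) (d+2)) else 0)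
        = (if tri k ≤ d then pc (d - tri k) else 0) := by
    intro k _
    have : Ee ((d+2)+k) (d+2) = tri k := by
      unfold Ee
      rw [if_pos (by omega), show (d+2)+k-(d+2) = k from by omega]
    rw [this]
  have hfirst : ∀ k ∈ Finset.range (d+2),
      (if Ee k (d+2) ≤ d then pc (d - Ee k (d+2)) else 0)
        = (if tri ((d+2)-1-k) ≤ d then pc (d - tri ((d+2)-1-k)) else 0) := by
    intro k hk
    have hklt : k < d + 2 := Finset.mem_range.mp hk
    have : Ee k (d+2) = tri ((d+2)-1-k) := by
      unfold Ee
      rw [if_neg (by omega), show (d+2)-k-1 = (d+2)-1-k from by omega]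
    rw [this]
  rw [Finset.sum_congr rfl hsecond, Finset.sum_congr rfl hfirst,
    Finset.sum_range_reflect (fun j => if tri j ≤ d then pc (d - tri j) else 0) (d+2)]
  rw [sum_tri_trunc d (d+2) (by omega), sum_tri_trunc d ((d+2)+1) (by omega)]
  ring


lemma prod_range_even_odd (f : ℕ → PowerSeries ℤ) :
    ∀ N, ∏ k ∈ Finset.range (2*N), f k
      = (∏ k ∈ Finset.range N, f (2*k)) * ∏ k ∈ Finset.range N, f (2*k+1) := by
  intro N
  induction N with
  | zero => simp
  | succ N ih =>
    rw [show 2*(N+1) = (2*N+1)+1 from by omega, Finset.prod_range_succ,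
      Finset.prod_range_succ, ih, Finset.prod_range_succ, Finset.prod_range_succ]
    ring

lemma coeff_L_eval (d : ℕ) :
    PowerSeries.coeff d (L (d+2)) = 2 * PowerSeries.coeff d (M * M) := by
  have hsplit : L (d+2)
      = (∏ k ∈ Finset.range (d+2), (1+Q^(k+1))) * (∏ k ∈ Finset.range (d+1), (1+Q^(k+1)))
        + (∏ k ∈ Finset.range (d+2), (1+Q^(k+1))) * (∏ k ∈ Finset.range (d+1), (1+Q^(k+1))) := by
    rw [L_def, Finset.prod_range_succ' (fun k => (1:PowerSeries ℤ)+Q^k) (d+1)]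
    simp only [pow_zero]
    ring
  rw [hsplit, map_add]
  have h1 : PowerSeries.coeff d
      ((∏ k ∈ Finset.range (d+2), (1+Q^(k+1))) * (∏ k ∈ Finset.range (d+1), (1+Q^(k+1))))
      = PowerSeries.coeff d (M * M) :=
    coeff_mul_congr d (fun j hj => (coeff_M j (d+2) (by omega)).symm)
      (fun j hj => (coeff_M j (d+1) (by omega)).symm)
  rw [h1]
  ring

lemma ThP_eq : Th * P = M * M := by
  apply PowerSeries.ext
  intro d
  have h := congrArg (PowerSeries.coeff d) (main_fin (d+2))
  rw [coeff_L_eval d, coeff_S_eval d] at h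
  have hTP := coeff_ThP d
  omega

lemma LHS_eq : qPoch (-(PowerSeries.X : PowerSeries ℤ)) (PowerSeries.X ^ 2) * Ek ℤ 4
    = M * M * Ek ℤ 1 := by
  apply PowerSeries.ext
  intro d
  have hL : PowerSeries.coeff d (qPoch (-(PowerSeries.X : PowerSeries ℤ)) (PowerSeries.X ^ 2) * Ek ℤ 4)
      = PowerSeries.coeff d ((∏ k ∈ Finset.range (d+1), (1+Q^(2*k+1)))
          * ∏ k ∈ Finset.range (d+1), (1-Q^(4*k+4))) :=
    coeff_mul_congr d (fun j hj => coeff_A j (d+1) (by omega))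
      (fun j hj => coeff_E4 j (d+1) (by omega))
  have hR : PowerSeries.coeff d (M * M * Ek ℤ 1)
      = PowerSeries.coeff d
        (((∏ k ∈ Finset.range (2*(d+1)), (1+Q^(k+1))) * ∏ k ∈ Finset.range (2*(d+1)), (1+Q^(k+1)))
          * Qf (2*(d+1))) :=
    coeff_mul_congr d
      (fun j hj => coeff_mul_congr j (fun i hi => coeff_M i (2*(d+1)) (by omega))
        (fun i hi => coeff_M i (2*(d+1)) (by omega)))
      (fun j hj => coeff_E1 j (2*(d+1)) (by omega))
  have hpair : (∏ k ∈ Finset.range (2*(d+1)), (1+Q^(k+1))) * Qf (2*(d+1))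
      = ∏ k ∈ Finset.range (2*(d+1)), (1-Q^(2*k+2)) := by
    rw [Qf_def, ← Finset.prod_mul_distrib]
    exact Finset.prod_congr rfl fun k _ => by ring
  have hD : ∏ k ∈ Finset.range (2*(d+1)), (1-Q^(2*k+2))
      = (∏ k ∈ Finset.range (d+1), (1-Q^(2*k+2)))
        * ∏ k ∈ Finset.range (d+1), (1-Q^(2*((d+1)+k)+2)) := by
    rw [show 2*(d+1) = (d+1)+(d+1) from by omega, Finset.prod_range_add]
  have hodd : ∏ k ∈ Finset.range (2*(d+1)), (1+Q^(k+1))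
      = (∏ k ∈ Finset.range (d+1), (1+Q^(2*k+1))) * ∏ k ∈ Finset.range (d+1), (1+Q^(2*k+2)) := by
    rw [prod_range_even_odd (fun k => 1+Q^(k+1)) (d+1)]
  have hB : (∏ k ∈ Finset.range (d+1), (1+Q^(2*k+2))) * (∏ k ∈ Finset.range (d+1), (1-Q^(2*k+2)))
      = ∏ k ∈ Finset.range (d+1), (1-Q^(4*k+4)) := by
    rw [← Finset.prod_mul_distrib]
    exact Finset.prod_congr rfl fun k _ => by ring
  have key : ((∏ k ∈ Finset.range (2*(d+1)), (1+Q^(k+1))) * ∏ k ∈ Finset.range (2*(d+1)), (1+Q^(k+1)))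
        * Qf (2*(d+1))
      = ((∏ k ∈ Finset.range (d+1), (1+Q^(2*k+1))) * ∏ k ∈ Finset.range (d+1), (1-Q^(4*k+4)))
        * ∏ k ∈ Finset.range (d+1), (1-Q^(2*((d+1)+k)+2)) := by
    calc ((∏ k ∈ Finset.range (2*(d+1)), (1+Q^(k+1))) * ∏ k ∈ Finset.range (2*(d+1)), (1+Q^(k+1)))
          * Qf (2*(d+1))
        = (∏ k ∈ Finset.range (2*(d+1)), (1+Q^(k+1)))
            * ((∏ k ∈ Finset.range (2*(d+1)), (1+Q^(k+1))) * Qf (2*(d+1))) := by ring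
      _ = _ := by
          rw [hpair, hD, hodd, ← hB]
          ring
  rw [hL, hR, key]
  obtain ⟨u, hu⟩ := prod_one_sub_tail (d+1) (d+1) (fun k => 2*((d+1)+k)+2)
    (fun k => by show d+1 ≤ 2*((d+1)+k)+2; omega)
  rw [hu, mul_add, mul_one, map_add]
  have hz : PowerSeries.coeff d
      (((∏ k ∈ Finset.range (d+1), (1+Q^(2*k+1))) * ∏ k ∈ Finset.range (d+1), (1-Q^(4*k+4)))
        * (Q^(d+1) * u)) = 0 := by
    have hdvd : (PowerSeries.X : PowerSeries ℤ)^(d+1) ∣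
        (((∏ k ∈ Finset.range (d+1), (1+Q^(2*k+1))) * ∏ k ∈ Finset.range (d+1), (1-Q^(4*k+4)))
          * (Q^(d+1) * u)) :=
      ⟨((∏ k ∈ Finset.range (d+1), (1+Q^(2*k+1))) * ∏ k ∈ Finset.range (d+1), (1-Q^(4*k+4))) * u,
        by ring⟩
    exact PowerSeries.X_pow_dvd_iff.mp hdvd d (by omega)
  rw [hz, add_zero]

lemma final_eq : qPoch (-(PowerSeries.X : PowerSeries ℤ)) (PowerSeries.X ^ 2) * Ek ℤ 4 = Th := by
  rw [LHS_eq, ← ThP_eq]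
  calc Th * P * Ek ℤ 1 = Th * (Ek ℤ 1 * P) := by ring
    _ = Th * 1 := by rw [E1_mul_P]
    _ = Th := mul_one Th

end PsiAux

/-- ψ(q) = ∑_{n ≥ 0} q^{n(n+1)/2}, i.e.
(−q;q²)_∞ (q⁴;q⁴)_∞ = ∑_{n≥0} q^{n(n+1)/2}, in ℤ[[q]]. -/
theorem psi_eq_triangular_theta :
    qPoch (-(PowerSeries.X : PowerSeries ℤ)) (PowerSeries.X ^ 2) * Ek ℤ 4 =
      PowerSeries.mk fun m => ({n : ℕ | n * (n + 1) / 2 = m}.ncard : ℤ) :=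
  PsiAux.final_eq
end
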